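/- arXiv:1009.5162 — 5 statements merged into one kernel-verified Lean document; each statement's English description precedes it below -/
import Mathlib

section
/- If G is a simple connected graph with n vertices and diameter d ≥ 1, then the rubbling number satisfies ρ(G) ≤ (n − d + 1)·(2^(d−1) − 1) + 2. -/
open Finset

variable {V : Type*}

/-- A pebbling move: remove two pebbles at a vertex `v` and add one pebble at an
adjacent vertex `u`. -/
def IsPebblingMove (G : SimpleGraph V) (p p' : V → ℕ) : Prop :=
  ∃ v u, G.Adj v u ∧ 2 ≤ p v ∧
    p' v = p v - 2 ∧ p' u = p u + 1 ∧ ∀ z, z ≠ v → z ≠ u → p' z = p z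

/-- A strict rubbling move: remove one pebble each at distinct vertices `v` and `w`,
both adjacent to `u`, and add one pebble at `u`. -/
def IsStrictRubblingMove (G : SimpleGraph V) (p p' : V → ℕ) : Prop :=
  ∃ v w u, v ≠ w ∧ G.Adj v u ∧ G.Adj w u ∧ 1 ≤ p v ∧ 1 ≤ p w ∧
    p' v = p v - 1 ∧ p' w = p w - 1 ∧ p' u = p u + 1 ∧
    ∀ z, z ≠ v → z ≠ w → z ≠ u → p' z = p z

/-- A rubbling move is a pebbling move or a strict rubbling move. -/
def IsRubblingMove (G : SimpleGraph V) (p p' : V → ℕ) : Prop :=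
  IsPebblingMove G p p' ∨ IsStrictRubblingMove G p p'

/-- A vertex `x` is reachable from the pebble distribution `p` if some executable
sequence of rubbling moves leads to a distribution with a pebble on `x`. -/
def RubblingReachable (G : SimpleGraph V) (p : V → ℕ) (x : V) : Prop :=
  ∃ q : V → ℕ, Relation.ReflTransGen (IsRubblingMove G) p q ∧ 1 ≤ q x

/-- The rubbling number: the least `m` such that every vertex is reachable from
every pebble distribution of size `m`. -/
noncomputable def rubblingNumber (G : SimpleGraph V) [Fintype V] : ℕ :=
  sInf {m | ∀ p : V → ℕ, ∑ v, p v = m → ∀ x, RubblingReachable G p x}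

/-- The optimal rubbling number: the least size of a pebble distribution from which
every vertex is reachable. -/
noncomputable def optimalRubblingNumber (G : SimpleGraph V) [Fintype V] : ℕ :=
  sInf {m | ∃ p : V → ℕ, ∑ v, p v = m ∧ ∀ x, RubblingReachable G p x}


/-!
Suppose `x` is not reachable from `p`, let `e` be the eccentricity of `x` and `P` a geodesic
from `x` to a vertex at distance `e`. Pebbling greedily along a path towards its start shows that
the pebbles on `P`, a pebble at distance `i` from `x` weighted `2 ^ (e - i)`, weigh less than
`2 ^ e`; in particular `P` carries fewer than `2 ^ e` pebbles. A vertex `v` with at least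
`2 ^ (dist x v - 1)` pebbles can on its own put a pebble on a neighbour of `x`, so two such
vertices, or one off `P` together with pebbles of weight at least `2 ^ (e - 1)` on `P` minus `x`,
would reach `x` by a final rubbling move. Hence either every vertex off `P` carries fewer than
`2 ^ (e - 1)` pebbles, or all but one do, that one carries fewer than `2 ^ e`, and `P` fewer
than `2 ^ (e - 1)`. Either way `p` has at most `(n - e + 1) (2 ^ (e - 1) - 1) + 1` pebbles, and this
bound increases with `e ≤ d`.
-/

open Relation

section Moves

variable {G : SimpleGraph V}

theorem IsRubblingMove.add_right {p q : V → ℕ} (h : IsRubblingMove G p q) (r : V → ℕ) :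
    IsRubblingMove G (p + r) (q + r) := by
  rcases h with ⟨v, u, hvu, h⟩ | ⟨v, w, u, hvw, hvu, hwu, h⟩
  · exact .inl ⟨v, u, hvu, by simp only [Pi.add_apply]; grind⟩
  · exact .inr ⟨v, w, u, hvw, hvu, hwu, by simp only [Pi.add_apply]; grind⟩

theorem Relation.ReflTransGen.isRubblingMove_add_right {p q : V → ℕ}
    (h : ReflTransGen (IsRubblingMove G) p q) (r : V → ℕ) :
    ReflTransGen (IsRubblingMove G) (p + r) (q + r) :=
  h.lift (· + r) fun _ _ hmove => hmove.add_right r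

theorem Relation.ReflTransGen.isRubblingMove_add {p₁ p₂ q₁ q₂ : V → ℕ}
    (h₁ : ReflTransGen (IsRubblingMove G) p₁ q₁)
    (h₂ : ReflTransGen (IsRubblingMove G) p₂ q₂) :
    ReflTransGen (IsRubblingMove G) (p₁ + p₂) (q₁ + q₂) := by
  refine (h₁.isRubblingMove_add_right p₂).trans ?_
  simpa only [add_comm q₁] using h₂.isRubblingMove_add_right q₁

theorem RubblingReachable.mono {p p' : V → ℕ} {a : V} (h : RubblingReachable G p a)
    (hp : p ≤ p') : RubblingReachable G p' a := by
  obtain ⟨q, hq, hqa⟩ := h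
  obtain ⟨r, rfl⟩ := exists_add_of_le hp
  exact ⟨q + r, hq.isRubblingMove_add_right r, le_add_right hqa⟩

variable [DecidableEq V]

theorem exists_eq_add_single_of_le {q : V → ℕ} {v : V} {j : ℕ} (h : j ≤ q v) :
    ∃ r : V → ℕ, q = r + Pi.single v j :=
  ⟨Function.update q v (q v - j), funext fun z => by
    by_cases hz : z = v <;> simp [hz]; omega⟩

theorem isRubblingMove_single_two {v u : V} (h : G.Adj v u) :
    IsRubblingMove G (Pi.single v 2) (Pi.single u 1) :=
  .inl ⟨v, u, h, by simp, by simp [h.ne], by simp [h.ne'], fun z hzv hzu => by simp [hzv, hzu]⟩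

theorem isRubblingMove_single_one_add_single_one {v w u : V} (hvw : v ≠ w) (hv : G.Adj v u)
    (hw : G.Adj w u) : IsRubblingMove G (Pi.single v 1 + Pi.single w 1) (Pi.single u 1) :=
  .inr ⟨v, w, u, hvw, hv, hw, by simp, by simp, by simp [hv.ne, hvw],
    by simp [hw.ne, hvw.symm], by simp [hv.ne', hw.ne'], fun z hzv hzw hzu => by simp [*]⟩

theorem reflTransGen_isRubblingMove_single_two_mul {v u : V} (h : G.Adj v u) (m : ℕ) :
    ReflTransGen (IsRubblingMove G) (Pi.single v (2 * m)) (Pi.single u m) := by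
  induction m with
  | zero => simp only [mul_zero, Pi.single_zero]; exact .refl
  | succ m ih =>
    rw [mul_add_one, Pi.single_add, Pi.single_add]
    exact ih.isRubblingMove_add (.single (isRubblingMove_single_two h))

theorem rubblingReachable_add_of_adj {p₁ p₂ : V → ℕ} {x a b : V} (hxa : G.Adj x a)
    (hxb : G.Adj x b) (ha : RubblingReachable G p₁ a) (hb : RubblingReachable G p₂ b) :
    RubblingReachable G (p₁ + p₂) x := by
  obtain ⟨q₁, hq₁, hq₁a⟩ := ha
  obtain ⟨q₂, hq₂, hq₂b⟩ := hb
  obtain ⟨r, hr⟩ : ∃ r, q₁ + q₂ = r + (Pi.single a 1 + Pi.single b 1) := by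
    obtain ⟨r₁, rfl⟩ := exists_eq_add_single_of_le hq₁a
    obtain ⟨r₂, rfl⟩ := exists_eq_add_single_of_le hq₂b
    exact ⟨r₁ + r₂, by abel⟩
  have hmove : IsRubblingMove G (Pi.single a 1 + Pi.single b 1) (Pi.single x 1) := by
    by_cases hab : a = b
    · subst hab
      rw [← Pi.single_add]
      exact isRubblingMove_single_two hxa.symm
    · exact isRubblingMove_single_one_add_single_one hab hxa.symm hxb.symm
  refine ⟨r + Pi.single x 1, (hq₁.isRubblingMove_add hq₂).tail ?_, by simp⟩
  rw [hr, add_comm r, add_comm r]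
  exact hmove.add_right r

end Moves

namespace SimpleGraph.Walk

variable {G : SimpleGraph V} {a b : V}

/-- `w.pebbleWeight p = ∑ i ≤ w.length, p (w.getVert i) * 2 ^ (w.length - i)`. -/
def pebbleWeight (p : V → ℕ) : {a b : V} → G.Walk a b → ℕ
  | a, _, nil => p a
  | a, _, cons _ w => 2 ^ (w.length + 1) * p a + w.pebbleWeight p

theorem pebbleWeight_congr {p q : V → ℕ} (w : G.Walk a b) (h : ∀ v ∈ w.support, p v = q v) :
    w.pebbleWeight p = w.pebbleWeight q := by
  induction w with
  | nil => simpa [pebbleWeight] using h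
  | cons _ w ih =>
    simp only [support_cons, List.mem_cons, forall_eq_or_imp] at h
    simp only [pebbleWeight, h.1, ih h.2]

theorem le_pebbleWeight (w : G.Walk a b) (p : V → ℕ) : p b ≤ w.pebbleWeight p := by
  induction w with
  | nil => exact le_rfl
  | cons _ w ih => exact ih.trans (Nat.le_add_left _ _)

theorem IsPath.sum_support_le_pebbleWeight [DecidableEq V] {w : G.Walk a b} (hw : w.IsPath)
    (p : V → ℕ) : ∑ v ∈ w.support.toFinset, p v ≤ w.pebbleWeight p := by
  induction w with
  | nil => simp [pebbleWeight]
  | @cons a _ _ _ w ih =>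
    rw [cons_isPath_iff] at hw
    rw [support_cons, List.toFinset_cons, sum_insert (by simpa using hw.2), pebbleWeight]
    gcongr
    · exact Nat.le_mul_of_pos_left _ (by positivity)
    · exact ih hw.1

theorem IsPath.card_support_toFinset [DecidableEq V] {w : G.Walk a b} (hw : w.IsPath) :
    w.support.toFinset.card = w.length + 1 := by
  rw [List.toFinset_card_of_nodup hw.support_nodup, length_support]

theorem IsPath.exists_reflTransGen_pebbleWeight_div_le {w : G.Walk a b} (hw : w.IsPath)
    (p : V → ℕ) :
    ∃ q, ReflTransGen (IsRubblingMove G) p q ∧ w.pebbleWeight p / 2 ^ w.length ≤ q a := by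
  classical
  induction w generalizing p with
  | nil => exact ⟨p, .refl, by simp [pebbleWeight]⟩
  | @cons a a' _ h w ih =>
    rw [cons_isPath_iff] at hw
    set c := p a
    obtain ⟨p₀, hp₀⟩ := exists_eq_add_single_of_le (le_refl c)
    have hweight : w.pebbleWeight p₀ = w.pebbleWeight p := by
      refine w.pebbleWeight_congr fun v hv => ?_
      have hva : v ≠ a := by rintro rfl; exact hw.2 hv
      simp [hp₀, hva]
    set m := w.pebbleWeight p / 2 ^ w.length
    obtain ⟨q, hq, hqa'⟩ := ih hw.1 p₀
    rw [hweight] at hqa'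
    obtain ⟨r, rfl⟩ := exists_eq_add_single_of_le (show 2 * (m / 2) ≤ q a' by omega)
    refine ⟨r + Pi.single a (m / 2) + Pi.single a c, ?_, ?_⟩
    · rw [hp₀]
      refine hq.isRubblingMove_add_right _ |>.trans ?_
      exact (ReflTransGen.refl.isRubblingMove_add
        (reflTransGen_isRubblingMove_single_two_mul h.symm _)).isRubblingMove_add_right _
    · have hdiv : (2 ^ (w.length + 1) * c + w.pebbleWeight p) / 2 ^ (w.length + 1) = c + m / 2 := by
        rw [add_comm, Nat.add_mul_div_left _ _ (by positivity), pow_succ,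
          ← Nat.div_div_eq_div_mul, add_comm]
      change (2 ^ (w.length + 1) * c + w.pebbleWeight p) / 2 ^ (w.length + 1) ≤ _
      rw [hdiv]
      simp only [Pi.add_apply, Pi.single_eq_same]
      omega

theorem IsPath.rubblingReachable_of_two_pow_length_le {w : G.Walk a b} (hw : w.IsPath)
    {p : V → ℕ} (h : 2 ^ w.length ≤ w.pebbleWeight p) : RubblingReachable G p a := by
  obtain ⟨q, hq, hqa⟩ := hw.exists_reflTransGen_pebbleWeight_div_le p
  exact ⟨q, hq, (Nat.one_le_div_iff (by positivity)).2 h |>.trans hqa⟩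

end SimpleGraph.Walk

theorem Finset.sum_le_card_mul_add_of_le {ι : Type*} {s : Finset ι} {f : ι → ℕ} {c d : ℕ}
    {i : ι} (hi : i ∈ s) (h : ∀ j ∈ s, j ≠ i → f j ≤ c) (hfi : f i ≤ c + d) :
    ∑ j ∈ s, f j ≤ s.card * c + d := by
  classical
  rw [← add_sum_erase s f hi]
  have hrest : ∑ j ∈ s.erase i, f j ≤ (s.erase i).card * c := by
    simpa using sum_le_card_nsmul _ f c fun j hj => h j (mem_of_mem_erase hj) (ne_of_mem_erase hj)
  rw [card_erase_of_mem hi] at hrest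
  have hs : s.card = s.card - 1 + 1 := (Nat.sub_add_cancel (card_pos.2 ⟨i, hi⟩)).symm
  rw [hs, add_mul, one_mul]
  omega

theorem SimpleGraph.diam_lt_card [Fintype V] [Nonempty V] (G : SimpleGraph V) :
    G.diam < Fintype.card V := by
  obtain ⟨u, v, huv⟩ := G.exists_dist_eq_diam
  rw [← huv]
  by_cases h : G.Reachable u v
  · obtain ⟨w, hw, hlen⟩ := h.exists_path_of_dist
    exact hlen ▸ hw.length_lt
  · rw [SimpleGraph.dist_eq_zero_of_not_reachable h]
    exact Fintype.card_pos

section Unreachable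

open SimpleGraph Walk

variable {G : SimpleGraph V} {p : V → ℕ} {x : V}

theorem lt_two_pow_dist_of_not_rubblingReachable (hG : G.Connected)
    (hx : ¬ RubblingReachable G p x) (v : V) : p v < 2 ^ G.dist x v := by
  obtain ⟨w, hw, hlen⟩ := hG.exists_path_of_dist x v
  by_contra! h
  exact hx (hw.rubblingReachable_of_two_pow_length_le (hlen ▸ h.trans (w.le_pebbleWeight p)))

theorem ne_of_two_pow_dist_sub_one_le (hx : ¬ RubblingReachable G p x) {v : V}
    (hv : 2 ^ (G.dist x v - 1) ≤ p v) : v ≠ x := by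
  rintro rfl
  exact hx ⟨p, .refl, by simpa using hv⟩

theorem exists_adj_rubblingReachable_single [DecidableEq V] (hG : G.Connected) {v : V}
    (hv : v ≠ x) {c : ℕ} (hc : 2 ^ (G.dist x v - 1) ≤ c) :
    ∃ a, G.Adj x a ∧ RubblingReachable G (Pi.single v c) a := by
  obtain ⟨w, hw, hlen⟩ := hG.exists_path_of_dist x v
  cases w with
  | nil => exact absurd rfl hv
  | cons h w =>
    refine ⟨_, h, ((cons_isPath_iff h w).1 hw).1.rubblingReachable_of_two_pow_length_le ?_⟩
    rw [length_cons] at hlen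
    calc 2 ^ w.length = 2 ^ (G.dist x v - 1) := by rw [← hlen, Nat.add_sub_cancel]
      _ ≤ (Pi.single v c : V → ℕ) v := by simpa using hc
      _ ≤ w.pebbleWeight (Pi.single v c) := w.le_pebbleWeight _

theorem eq_of_two_pow_dist_sub_one_le (hG : G.Connected) (hx : ¬ RubblingReachable G p x)
    {v v' : V} (h : 2 ^ (G.dist x v - 1) ≤ p v) (h' : 2 ^ (G.dist x v' - 1) ≤ p v') :
    v = v' := by
  classical
  by_contra hne
  obtain ⟨a, hxa, ha⟩ :=
    exists_adj_rubblingReachable_single hG (ne_of_two_pow_dist_sub_one_le hx h) h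
  obtain ⟨b, hxb, hb⟩ :=
    exists_adj_rubblingReachable_single hG (ne_of_two_pow_dist_sub_one_le hx h') h'
  refine hx ((rubblingReachable_add_of_adj hxa hxb ha hb).mono fun z => ?_)
  by_cases hzv : z = v
  · subst hzv; simp [hne]
  · by_cases hzv' : z = v' <;> simp [*]

theorem sum_support_lt_of_not_rubblingReachable [DecidableEq V] (hx : ¬ RubblingReachable G p x)
    {y : V} {w : G.Walk x y} (hw : w.IsPath) :
    ∑ v ∈ w.support.toFinset, p v < 2 ^ w.length := by
  by_contra! h
  exact hx (hw.rubblingReachable_of_two_pow_length_le (h.trans (hw.sum_support_le_pebbleWeight p)))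

theorem sum_support_cons_lt_of_not_rubblingReachable [DecidableEq V] (hG : G.Connected)
    (hx : ¬ RubblingReachable G p x) {a b : V} (hxa : G.Adj x a) {w : G.Walk a b}
    (hw : (cons hxa w).IsPath) {v : V} (hvw : v ∉ (cons hxa w).support)
    (hpv : 2 ^ (G.dist x v - 1) ≤ p v) :
    ∑ u ∈ (cons hxa w).support.toFinset, p u < 2 ^ w.length := by
  have hw' := (cons_isPath_iff hxa w).1 hw
  set P := w.support.toFinset
  have hsum : ∑ u ∈ (cons hxa w).support.toFinset, p u = ∑ u ∈ P, p u := by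
    have hpx : p x = 0 := by simpa using lt_two_pow_dist_of_not_rubblingReachable hG hx x
    rw [support_cons, List.toFinset_cons, sum_insert (by simpa [P] using hw'.2), hpx, zero_add]
  rw [hsum]
  by_contra! h
  have ha : RubblingReachable G ((P : Set V).indicator p) a := by
    refine hw'.1.rubblingReachable_of_two_pow_length_le (h.trans ?_)
    rw [w.pebbleWeight_congr fun u hu => Set.indicator_of_mem (by simpa [P] using hu) p]
    exact hw'.1.sum_support_le_pebbleWeight p
  obtain ⟨b, hxb, hb⟩ :=
    exists_adj_rubblingReachable_single hG (ne_of_two_pow_dist_sub_one_le hx hpv) hpv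
  refine hx ((rubblingReachable_add_of_adj hxa hxb ha hb).mono fun z => ?_)
  by_cases hzv : z = v
  · subst hzv; simp_all [P]
  · by_cases hzP : z ∈ P <;> simp [*]

theorem sum_le_of_not_rubblingReachable [Fintype V] (hG : G.Connected)
    (hx : ¬ RubblingReachable G p x) {y : V} {w : G.Walk x y} (hw : w.IsPath)
    (hecc : ∀ v, G.dist x v ≤ w.length) :
    ∑ v, p v ≤ (Fintype.card V - w.length + 1) * (2 ^ (w.length - 1) - 1) + 1 := by
  classical
  have hp := lt_two_pow_dist_of_not_rubblingReachable hG hx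
  cases w with
  | nil =>
    have hp0 : ∀ v, p v = 0 := fun v => by simpa [Nat.le_zero.1 (hecc v)] using hp v
    simp [hp0]
  | @cons _ u _ h w =>
    set P := (cons h w).support.toFinset
    obtain ⟨N, hN⟩ : ∃ N, Fintype.card V = N + P.card :=
      Nat.exists_eq_add_of_le' (card_le_univ P)
    have hPc : Pᶜ.card = N := by rw [card_compl, hN, Nat.add_sub_cancel]
    rw [hw.card_support_toFinset, length_cons] at hN
    have hheavy_le : ∀ v, p v ≤ 2 ^ w.length - 1 + 2 ^ w.length := fun v => by
      have := (hp v).trans_le (Nat.pow_le_pow_right two_pos (hecc v))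
      rw [length_cons, pow_succ] at this
      omega
    have hlight : ∀ v, p v < 2 ^ (G.dist x v - 1) → p v ≤ 2 ^ w.length - 1 := fun v hv => by
      have := hv.trans_le (Nat.pow_le_pow_right two_pos (Nat.sub_le_of_le_add (hecc v)))
      omega
    rw [← sum_add_sum_compl P p, length_cons, Nat.add_sub_cancel,
      show Fintype.card V - (w.length + 1) + 1 = N + 2 by omega, add_mul]
    by_cases hheavy : ∃ v ∈ Pᶜ, 2 ^ (G.dist x v - 1) ≤ p v
    · obtain ⟨v, hvP, hv⟩ := hheavy
      have hpath : ∑ u ∈ P, p u < 2 ^ w.length :=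
        sum_support_cons_lt_of_not_rubblingReachable hG hx h hw (by simpa [P] using hvP) hv
      have hoff : ∑ u ∈ Pᶜ, p u ≤ Pᶜ.card * (2 ^ w.length - 1) + 2 ^ w.length :=
        sum_le_card_mul_add_of_le hvP (fun u _ huv => hlight u
          (not_le.1 fun hu => huv (eq_of_two_pow_dist_sub_one_le hG hx hu hv))) (hheavy_le v)
      rw [hPc] at hoff
      omega
    · push Not at hheavy
      have hpath : ∑ u ∈ P, p u < 2 ^ w.length * 2 := by
        rw [← pow_succ]
        exact sum_support_lt_of_not_rubblingReachable hx hw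
      have hoff : ∑ u ∈ Pᶜ, p u ≤ Pᶜ.card • (2 ^ w.length - 1) :=
        sum_le_card_nsmul Pᶜ p _ fun u hu => hlight u (hheavy u hu)
      rw [hPc, smul_eq_mul] at hoff
      omega

end Unreachable

theorem tsub_add_one_mul_two_pow_pred_le {n e d : ℕ} (hed : e ≤ d) (hdn : d < n) :
    (n - e + 1) * (2 ^ (e - 1) - 1) ≤ (n - d + 1) * (2 ^ (d - 1) - 1) := by
  induction d, hed using Nat.le_induction with
  | base => rfl
  | succ d _ ih =>
    refine (ih (by omega)).trans ?_
    rw [Nat.add_sub_cancel]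
    rcases Nat.eq_zero_or_pos d with rfl | hd
    · simp
    · have hpow : 2 ^ d = 2 * 2 ^ (d - 1) := by rw [← pow_succ', Nat.sub_add_cancel hd]
      calc (n - d + 1) * (2 ^ (d - 1) - 1)
          ≤ (2 * (n - (d + 1) + 1)) * (2 ^ (d - 1) - 1) := by gcongr; omega
        _ = (n - (d + 1) + 1) * (2 * (2 ^ (d - 1) - 1)) := by ring
        _ ≤ (n - (d + 1) + 1) * (2 ^ d - 1) := Nat.mul_le_mul_left _ (by omega)

theorem rubblingNumber_le_of_diam_general {V : Type*} [Fintype V] (G : SimpleGraph V)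
    (hconn : G.Connected) (n d : ℕ) (hn : Fintype.card V = n)
    (hd : G.diam = d) :
    rubblingNumber G ≤ (n - d + 1) * (2 ^ (d - 1) - 1) + 2 := by
  refine Nat.sInf_le fun p hp x => ?_
  by_contra hx
  have : Nonempty V := hconn.nonempty
  obtain ⟨y, hy⟩ := Finite.exists_max (G.dist x)
  obtain ⟨w, hw, hlen⟩ := hconn.exists_path_of_dist x y
  have hxy : G.dist x y ≤ d := hd ▸ G.dist_le_diam (G.connected_iff_ediam_ne_top.1 hconn)
  have hdn : d < n := hn ▸ hd ▸ G.diam_lt_card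
  have hsum := sum_le_of_not_rubblingReachable hconn hx hw (hlen ▸ hy)
  rw [hlen, hn, hp] at hsum
  have := tsub_add_one_mul_two_pow_pred_le hxy hdn
  omega

/-- If `G` is a simple connected graph with `n` vertices and diameter `d ≥ 1`, then
`ρ(G) ≤ (n - d + 1)(2^(d-1) - 1) + 2`. -/
theorem rubblingNumber_le_of_diam {V : Type*} [Fintype V] (G : SimpleGraph V)
    (hconn : G.Connected) (n d : ℕ) (hn : Fintype.card V = n)
    (hd : G.diam = d) (hd1 : 1 ≤ d) :
    rubblingNumber G ≤ (n - d + 1) * (2 ^ (d - 1) - 1) + 2 :=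
  rubblingNumber_le_of_diam_general G hconn n d hn hd
end

section
/- For every n ≥ 3, the graph G_n satisfies ρ(G_n) ≤ ⌊√(2n − 1)⌋ + 2. -/
open Finset

variable {V : Type*}

/-- The number of vertices of the graph `H'ₛ`, namely `s(s+1)/2 - ⌊(s-1)/2⌋`. -/
def HpSize (s : ℕ) : ℕ := s * (s + 1) / 2 - (s - 1) / 2

/-- The vertex set of the graph `Gₙ`, as a finset of pairs of naturals.
Here `s = ⌊√(2n-1)⌋` is the unique `s` with `HpSize s ≤ n < HpSize (s+1)`.
A pair `(i,j)` with `1 ≤ i ≤ j ≤ s` is a vertex of `H'ₛ` (hence of `Gₙ`) unless it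
was deleted from `Hₛ`, i.e. unless `j = i + 1`, `j ≡ s (mod 2)` and `3 ≤ j`.
In addition, `Gₙ` has the extra vertices `(0, s), (0, s-1), …` — altogether
`n - HpSize s` of them, so that `Gₙ` has exactly `n` vertices. -/
def GnVerts (n : ℕ) : Finset (ℕ × ℕ) :=
  (Finset.range (Nat.sqrt (2 * n - 1) + 1) ×ˢ Finset.range (Nat.sqrt (2 * n - 1) + 1)).filter
    fun v =>
      (1 ≤ v.1 ∧ v.1 ≤ v.2 ∧ v.2 ≤ Nat.sqrt (2 * n - 1) ∧
        ¬(v.2 = v.1 + 1 ∧ v.2 % 2 = Nat.sqrt (2 * n - 1) % 2 ∧ 3 ≤ v.2)) ∨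
      (v.1 = 0 ∧ v.2 ≤ Nat.sqrt (2 * n - 1) ∧
        Nat.sqrt (2 * n - 1) < v.2 + (n - HpSize (Nat.sqrt (2 * n - 1))))

/-- The graph `Gₙ`: two distinct vertices are adjacent iff they share a row or a
column (first or second coordinate), or they form one of the extra spine edges
`{(t-1,t-1),(t,t)}` with `t ≡ s (mod 2)` and `3 ≤ t ≤ s`, where `s = ⌊√(2n-1)⌋`. -/
def GnGraph (n : ℕ) : SimpleGraph {v : ℕ × ℕ // v ∈ GnVerts n} :=
  SimpleGraph.fromRel fun a b =>
    a.1.1 = b.1.1 ∨ a.1.2 = b.1.2 ∨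
    (a.1.1 = a.1.2 ∧ b.1.1 = b.1.2 ∧ b.1.1 = a.1.1 + 1 ∧
      b.1.1 % 2 = Nat.sqrt (2 * n - 1) % 2 ∧ 3 ≤ b.1.1 ∧ b.1.1 ≤ Nat.sqrt (2 * n - 1))

section Abstract

variable [DecidableEq V] (G : SimpleGraph V)
set_option linter.unusedSectionVars false

lemma reach_step {p p' : V → ℕ} {x : V} (h : IsRubblingMove G p p')
    (h' : RubblingReachable G p' x) : RubblingReachable G p x := by
  obtain ⟨q, hq, hx⟩ := h'
  exact ⟨q, Relation.ReflTransGen.head h hq, hx⟩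

lemma reach_of_two {x c : V} (h : G.Adj c x) {p : V → ℕ} (hc : 2 ≤ p c) :
    RubblingReachable G p x := by
  refine ⟨fun z => if z = c then p c - 2 else if z = x then p x + 1 else p z,
    Relation.ReflTransGen.single (Or.inl ⟨c, x, h, hc, ?_, ?_, ?_⟩), ?_⟩
  · simp
  · simp [h.ne']
  · intro z hzc hzx; simp [hzc, hzx]
  · simp [h.ne']

lemma reach_of_one_one {x c d : V} (hc : G.Adj c x) (hd : G.Adj d x) (hcd : c ≠ d)
    {p : V → ℕ} (h1 : 1 ≤ p c) (h2 : 1 ≤ p d) : RubblingReachable G p x := by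
  refine ⟨fun z => if z = c then p c - 1 else if z = d then p d - 1
      else if z = x then p x + 1 else p z,
    Relation.ReflTransGen.single (Or.inr ⟨c, d, x, hcd, hc, hd, h1, h2, ?_, ?_, ?_, ?_⟩), ?_⟩
  · simp
  · simp [hcd.symm]
  · simp [hc.ne', hd.ne']
  · intro z h1 h2 h3; simp [h1, h2, h3]
  · simp [hc.ne', hd.ne']

lemma two_pebbles {F : Finset V} {p : V → ℕ} (h : 2 ≤ ∑ v ∈ F, p v) :
    (∃ u ∈ F, 2 ≤ p u) ∨ ∃ u ∈ F, ∃ v ∈ F, u ≠ v ∧ 1 ≤ p u ∧ 1 ≤ p v := by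
  by_cases h1 : ∃ u ∈ F, 2 ≤ p u
  · exact Or.inl h1
  push_neg at h1
  have h0 : 0 < ∑ v ∈ F, p v := by omega
  have : ∑ v ∈ F, (fun _ => 0) v < ∑ v ∈ F, p v := by simpa using h0
  obtain ⟨u, hu, hu1⟩ := Finset.exists_lt_of_sum_lt this
  have hFu : u ∈ F := hu
  have hsum : p u + ∑ v ∈ F.erase u, p v = ∑ v ∈ F, p v := Finset.add_sum_erase F p hFu
  have h2 : 0 < ∑ v ∈ F.erase u, p v := by
    have := h1 u hFu; omega
  have : ∑ v ∈ F.erase u, (fun _ => 0) v < ∑ v ∈ F.erase u, p v := by simpa using h2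
  obtain ⟨v, hv, hv1⟩ := Finset.exists_lt_of_sum_lt this
  exact Or.inr ⟨u, hFu, v, Finset.mem_of_mem_erase hv, (Finset.ne_of_mem_erase hv).symm,
    by omega, by omega⟩

lemma deliver {F : Finset V} {α : V}
    (hap : ∀ u ∈ F, G.Adj u α)
    {p : V → ℕ} (h2 : 2 ≤ ∑ v ∈ F, p v) :
    ∃ p', IsRubblingMove G p p' ∧ p' α = p α + 1 ∧
      (∀ z, z ∉ F → z ≠ α → p' z = p z) ∧ ∑ v ∈ F, p' v + 2 = ∑ v ∈ F, p v := by
  have hαF : α ∉ F := fun h => (G.irrefl (hap α h))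
  rcases two_pebbles h2 with ⟨u, hu, h2u⟩ | ⟨u, hu, v, hv, huv, h1u, h1v⟩
  · refine ⟨fun z => if z = u then p u - 2 else if z = α then p α + 1 else p z,
      Or.inl ⟨u, α, hap u hu, h2u, by simp, ?_, ?_⟩, ?_, ?_, ?_⟩
    · have : α ≠ u := fun h => hαF (h ▸ hu)
      simp [this]
    · intro z h1 h2; simp [h1, h2]
    · have : α ≠ u := fun h => hαF (h ▸ hu)
      simp [this]
    · intro z hz hzα
      have : z ≠ u := fun h => hz (h ▸ hu)
      simp [this, hzα]
    · rw [← Finset.add_sum_erase F _ hu, ← Finset.add_sum_erase F _ hu]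
      have : ∀ z ∈ F.erase u, (if z = u then p u - 2 else if z = α then p α + 1 else p z) = p z := by
        intro z hz
        have h1 : z ≠ u := Finset.ne_of_mem_erase hz
        have h2 : z ≠ α := fun h => hαF (h ▸ Finset.mem_of_mem_erase hz)
        simp [h1, h2]
      rw [Finset.sum_congr rfl this]
      have e : (if u = u then p u - 2 else if u = α then p α + 1 else p u) = p u - 2 := by simp
      rw [e, show (F.erase u).sum p = ∑ x ∈ F.erase u, p x from rfl]; omega
  · have hvu : v ∈ F.erase u := Finset.mem_erase.2 ⟨huv.symm, hv⟩
    refine ⟨fun z => if z = u then p u - 1 else if z = v then p v - 1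
        else if z = α then p α + 1 else p z,
      Or.inr ⟨u, v, α, huv, hap u hu, hap v hv, h1u, h1v, by simp, ?_, ?_, ?_⟩, ?_, ?_, ?_⟩
    · simp [huv.symm]
    · have h1 : α ≠ u := fun h => hαF (h ▸ hu)
      have h2 : α ≠ v := fun h => hαF (h ▸ hv)
      simp [h1, h2]
    · intro z h1 h2 h3; simp [h1, h2, h3]
    · have h1 : α ≠ u := fun h => hαF (h ▸ hu)
      have h2 : α ≠ v := fun h => hαF (h ▸ hv)
      simp [h1, h2]
    · intro z hz hzα
      have h1 : z ≠ u := fun h => hz (h ▸ hu)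
      have h2 : z ≠ v := fun h => hz (h ▸ hv)
      simp [h1, h2, hzα]
    · rw [← Finset.add_sum_erase F _ hu, ← Finset.add_sum_erase (F.erase u) _ hvu,
        ← Finset.add_sum_erase F _ hu, ← Finset.add_sum_erase (F.erase u) _ hvu]
      have : ∀ z ∈ (F.erase u).erase v,
          (if z = u then p u - 1 else if z = v then p v - 1 else if z = α then p α + 1 else p z)
            = p z := by
        intro z hz
        have h1 : z ≠ v := Finset.ne_of_mem_erase hz
        have h2 : z ≠ u := Finset.ne_of_mem_erase (Finset.mem_of_mem_erase hz)
        have h3 : z ≠ α := fun h => hαF (h ▸ Finset.mem_of_mem_erase (Finset.mem_of_mem_erase hz))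
        simp [h1, h2, h3]
      rw [Finset.sum_congr rfl this]
      have e1 : (if u = u then p u - 1 else if u = v then p v - 1 else if u = α then p α + 1
          else p u) = p u - 1 := by simp
      have e2 : (if v = u then p u - 1 else if v = v then p v - 1 else if v = α then p α + 1
          else p v) = p v - 1 := by simp [Ne.symm huv]
      rw [e1, e2, show ((F.erase u).erase v).sum p = ∑ x ∈ (F.erase u).erase v, p x from rfl]
      omega

end Abstract

section Master

variable [DecidableEq V] (G : SimpleGraph V)
set_option linter.unusedSectionVars false

lemma master [Fintype V] {x : V} (t : ℕ) (σ : V → ℕ)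
    (hσ0 : ∀ v, σ v = 0 ↔ v = x ∨ G.Adj v x)
    (hσle : ∀ v, σ v ≤ t)
    (hapex : ∀ k, k ≠ 0 → ∀ v, σ v = k → ∃ w, G.Adj w x ∧ ∀ u, σ u = k → G.Adj u w)
    (p : V → ℕ) (hp : t + 3 ≤ ∑ v, p v) : RubblingReachable G p x := by
  classical
  by_cases hx : 1 ≤ p x
  · exact ⟨p, Relation.ReflTransGen.refl, hx⟩
  have hx0 : p x = 0 := by omega
  obtain ⟨F, hmemF⟩ : ∃ F : ℕ → Finset V, ∀ k v, v ∈ F k ↔ σ v = k :=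
    ⟨fun k => Finset.univ.filter (fun v => σ v = k), by intro k v; simp⟩
  have hFeq : ∀ k, F k = Finset.univ.filter (fun v => σ v = k) := by
    intro k; ext v; simp [hmemF]
  by_cases hS0 : 2 ≤ ∑ v ∈ F 0, p v
  · rcases two_pebbles hS0 with ⟨u, hu, h2u⟩ | ⟨u, hu, v, hv, huv, h1u, h1v⟩
    · rcases (hσ0 u).1 ((hmemF 0 u).1 hu) with rfl | hadj
      · exact ⟨p, Relation.ReflTransGen.refl, by omega⟩
      · exact reach_of_two G hadj h2u
    · rcases (hσ0 u).1 ((hmemF 0 u).1 hu) with rfl | hau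
      · exact ⟨p, Relation.ReflTransGen.refl, h1u⟩
      rcases (hσ0 v).1 ((hmemF 0 v).1 hv) with rfl | hav
      · exact ⟨p, Relation.ReflTransGen.refl, h1v⟩
      exact reach_of_one_one G hau hav huv h1u h1v
  -- delivery wrapper
  have hdel : ∀ (k : ℕ), k ≠ 0 → ∀ (p₀ : V → ℕ), 2 ≤ ∑ v ∈ F k, p₀ v →
      ∃ w p', G.Adj w x ∧ IsRubblingMove G p₀ p' ∧
        p' w = p₀ w + 1 ∧ (∀ z, σ z ≠ k → z ≠ w → p' z = p₀ z) ∧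
        ∑ v ∈ F k, p' v + 2 = ∑ v ∈ F k, p₀ v := by
    intro k hk p₀ h2
    have h0 : ∑ i ∈ F k, (fun _ => 0) i < ∑ v ∈ F k, p₀ v := by
      simpa using (by omega : 0 < ∑ v ∈ F k, p₀ v)
    obtain ⟨v0, hv0, -⟩ := Finset.exists_lt_of_sum_lt h0
    obtain ⟨w, hwx, hwmem⟩ := hapex k hk v0 ((hmemF k v0).1 hv0)
    obtain ⟨p', hmove, hw, hoff, hsum⟩ :=
      deliver G (fun u hu => hwmem u ((hmemF k u).1 hu)) h2
    exact ⟨w, p', hwx, hmove, hw,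
      fun z hz1 hz2 => hoff z (fun hzF => hz1 ((hmemF k z).1 hzF)) hz2, hsum⟩
  have hσadj : ∀ w, G.Adj w x → σ w = 0 := fun w hw => (hσ0 w).2 (Or.inr hw)
  by_cases hbig : ∃ k1, k1 ≠ 0 ∧ 2 ≤ ∑ v ∈ F k1, p v ∧
      ∃ k2, k2 ≠ 0 ∧ k2 ≠ k1 ∧ 2 ≤ ∑ v ∈ F k2, p v
  · obtain ⟨k1, hk1, h21, k2, hk2, hne, h22⟩ := hbig
    obtain ⟨w1, p1, hw1x, hm1, hp1w, hp1off, -⟩ := hdel k1 hk1 p h21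
    have h22' : 2 ≤ ∑ v ∈ F k2, p1 v := by
      have : ∀ z ∈ F k2, p1 z = p z := by
        intro z hz
        have hσz : σ z = k2 := (hmemF k2 z).1 hz
        exact hp1off z (by rw [hσz]; exact fun h => hne h)
          (fun h => hk2 (by rw [← hσz, h, hσadj w1 hw1x]))
      rw [Finset.sum_congr rfl this]; exact h22
    obtain ⟨w2, p2, hw2x, hm2, hp2w, hp2off, -⟩ := hdel k2 hk2 p1 h22'
    by_cases hww : w1 = w2
    · subst hww
      refine reach_step G hm1 (reach_step G hm2 (reach_of_two G hw1x ?_))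
      rw [hp2w, hp1w]; omega
    · have e1 : p2 w1 = p w1 + 1 := by
        rw [hp2off w1 (by rw [hσadj w1 hw1x]; exact fun h => hk2 h.symm) hww, hp1w]
      refine reach_step G hm1 (reach_step G hm2 (reach_of_one_one G hw1x hw2x hww ?_ ?_))
      · omega
      · rw [hp2w]; omega
  by_cases hone : ∃ k, k ≠ 0 ∧ 2 ≤ ∑ v ∈ F k, p v
  · obtain ⟨k, hk, h2k⟩ := hone
    by_cases hS01 : 1 ≤ ∑ v ∈ F 0, p v
    · have h0 : ∑ i ∈ F 0, (fun _ => 0) i < ∑ v ∈ F 0, p v := by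
        simpa using (by omega : 0 < ∑ v ∈ F 0, p v)
      obtain ⟨c, hc, hc1⟩ := Finset.exists_lt_of_sum_lt h0
      have hσc : σ c = 0 := (hmemF 0 c).1 hc
      have hcx : c ≠ x := fun h => by rw [h] at hc1; omega
      have hcadj : G.Adj c x := ((hσ0 c).1 hσc).resolve_left hcx
      obtain ⟨w, p1, hwx, hm1, hp1w, hp1off, -⟩ := hdel k hk p h2k
      by_cases hcw : c = w
      · subst hcw
        refine reach_step G hm1 (reach_of_two G hcadj ?_)
        rw [hp1w]; omega
      · have e1 : p1 c = p c := hp1off c (by rw [hσc]; exact fun h => hk h.symm) hcw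
        refine reach_step G hm1 (reach_of_one_one G hcadj hwx hcw ?_ ?_)
        · omega
        · rw [hp1w]; omega
    · -- S 0 = 0 and only fiber k can be big : S k ≥ 4
      push_neg at hbig
      have hrest : ∀ k', k' ∈ (Finset.range (t + 1)).erase k → ∑ v ∈ F k', p v ≤ 1 := by
        intro k' hk'
        have hk'k : k' ≠ k := Finset.ne_of_mem_erase hk'
        by_cases h0 : k' = 0
        · subst h0; omega
        · by_contra hcon
          exact absurd (hbig k' h0 (by omega) k hk hk'k.symm) (by omega)
      have htot : ∑ k' ∈ Finset.range (t + 1), ∑ v ∈ F k', p v = ∑ v, p v := by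
        simp only [hFeq]
        exact Finset.sum_fiberwise_of_maps_to
          (fun v _ => Finset.mem_range.2 (Nat.lt_succ_of_le (hσle v))) p
      have hkmem : k ∈ Finset.range (t + 1) := by
        have h0 : ∑ i ∈ F k, (fun _ => 0) i < ∑ v ∈ F k, p v := by
          simpa using (by omega : 0 < ∑ v ∈ F k, p v)
        obtain ⟨v0, hv0, -⟩ := Finset.exists_lt_of_sum_lt h0
        have := hσle v0
        have := (hmemF k v0).1 hv0
        exact Finset.mem_range.2 (by omega)
      have hsplit : ∑ v ∈ F k, p v + ∑ k' ∈ (Finset.range (t + 1)).erase k, ∑ v ∈ F k', p v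
          = ∑ k' ∈ Finset.range (t + 1), ∑ v ∈ F k', p v :=
        Finset.add_sum_erase (Finset.range (t + 1)) (fun k' => ∑ v ∈ F k', p v) hkmem
      have hcard : ((Finset.range (t + 1)).erase k).card = t := by
        rw [Finset.card_erase_of_mem hkmem, Finset.card_range]; omega
      have hbound : ∑ k' ∈ (Finset.range (t + 1)).erase k, ∑ v ∈ F k', p v ≤ t := by
        calc ∑ k' ∈ (Finset.range (t + 1)).erase k, ∑ v ∈ F k', p v
            ≤ ((Finset.range (t + 1)).erase k).card • 1 :=
              Finset.sum_le_card_nsmul _ _ 1 hrest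
          _ = t := by rw [hcard]; simp
      have h0mem : (0 : ℕ) ∈ (Finset.range (t + 1)).erase k :=
        Finset.mem_erase.2 ⟨Ne.symm hk, Finset.mem_range.2 (by omega)⟩
      have hsplit2 : ∑ v ∈ F 0, p v
          + ∑ k' ∈ ((Finset.range (t + 1)).erase k).erase 0, ∑ v ∈ F k', p v
          = ∑ k' ∈ (Finset.range (t + 1)).erase k, ∑ v ∈ F k', p v :=
        Finset.add_sum_erase _ (fun k' => ∑ v ∈ F k', p v) h0mem
      have hcard2 : (((Finset.range (t + 1)).erase k).erase 0).card = t - 1 := by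
        rw [Finset.card_erase_of_mem h0mem, hcard]
      have hbound2 : ∑ k' ∈ ((Finset.range (t + 1)).erase k).erase 0, ∑ v ∈ F k', p v ≤ t - 1 := by
        calc ∑ k' ∈ ((Finset.range (t + 1)).erase k).erase 0, ∑ v ∈ F k', p v
            ≤ (((Finset.range (t + 1)).erase k).erase 0).card • 1 :=
              Finset.sum_le_card_nsmul _ _ 1
                (fun k' hk' => hrest k' (Finset.mem_of_mem_erase hk'))
          _ = t - 1 := by rw [hcard2]; simp
      have hkt : k ≤ t := by
        have := Finset.mem_range.1 hkmem; omega
      have h4 : 4 ≤ ∑ v ∈ F k, p v := by omega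
      obtain ⟨w1, p1, hw1x, hm1, hp1w, hp1off, hs1⟩ := hdel k hk p (by omega)
      obtain ⟨w2, p2, hw2x, hm2, hp2w, hp2off, -⟩ := hdel k hk p1 (by omega)
      by_cases hww : w1 = w2
      · subst hww
        refine reach_step G hm1 (reach_step G hm2 (reach_of_two G hw1x ?_))
        rw [hp2w, hp1w]; omega
      · have e1 : p2 w1 = p w1 + 1 := by
          rw [hp2off w1 (by rw [hσadj w1 hw1x]; exact fun h => hk h.symm) hww, hp1w]
        refine reach_step G hm1 (reach_step G hm2 (reach_of_one_one G hw1x hw2x hww ?_ ?_))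
        · omega
        · rw [hp2w]; omega
  · -- all fibers small : contradiction
    exfalso
    push_neg at hone
    have htot : ∑ k' ∈ Finset.range (t + 1), ∑ v ∈ F k', p v = ∑ v, p v := by
      simp only [hFeq]
      exact Finset.sum_fiberwise_of_maps_to
        (fun v _ => Finset.mem_range.2 (Nat.lt_succ_of_le (hσle v))) p
    have hbound : ∑ k' ∈ Finset.range (t + 1), ∑ v ∈ F k', p v ≤ t + 1 := by
      calc ∑ k' ∈ Finset.range (t + 1), ∑ v ∈ F k', p v
          ≤ (Finset.range (t + 1)).card • 1 := by
            refine Finset.sum_le_card_nsmul _ _ 1 ?_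
            intro k' _
            by_cases h0 : k' = 0
            · subst h0; omega
            · have := hone k' h0; omega
        _ = t + 1 := by simp
    omega

end Master

/-- `⌊√(2n-1)⌋`. -/
def sqn (n : ℕ) : ℕ := Nat.sqrt (2 * n - 1)

/-- The number of extra `(0,j)` vertices. -/
def En (n : ℕ) : ℕ := n - HpSize (sqn n)

/-- Pair-level vertex predicate. -/
def VertP (n : ℕ) (v : ℕ × ℕ) : Prop :=
  (1 ≤ v.1 ∧ v.1 ≤ v.2 ∧ v.2 ≤ sqn n ∧
    ¬(v.2 = v.1 + 1 ∧ v.2 % 2 = sqn n % 2 ∧ 3 ≤ v.2)) ∨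
  (v.1 = 0 ∧ v.2 ≤ sqn n ∧ sqn n < v.2 + En n)

/-- Pair-level base relation. -/
def RelP (n : ℕ) (u w : ℕ × ℕ) : Prop :=
  u.1 = w.1 ∨ u.2 = w.2 ∨
    (u.1 = u.2 ∧ w.1 = w.2 ∧ w.1 = u.1 + 1 ∧ w.1 % 2 = sqn n % 2 ∧ 3 ≤ w.1 ∧ w.1 ≤ sqn n)

/-- Pair-level adjacency. -/
def AdjP (n : ℕ) (u w : ℕ × ℕ) : Prop := u ≠ w ∧ (RelP n u w ∨ RelP n w u)

lemma mem_GnVerts {n : ℕ} {v : ℕ × ℕ} : v ∈ GnVerts n ↔ VertP n v := by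
  unfold GnVerts VertP sqn En
  simp only [Finset.mem_filter, Finset.mem_product, Finset.mem_range]
  constructor
  · exact fun h => h.2
  · intro h
    refine ⟨⟨?_, ?_⟩, h⟩ <;> omega

lemma adjP_iff {n : ℕ} (u w : {v : ℕ × ℕ // v ∈ GnVerts n}) :
    (GnGraph n).Adj u w ↔ AdjP n u.1 w.1 := by
  unfold GnGraph AdjP RelP sqn
  rw [SimpleGraph.fromRel_adj]
  have : u ≠ w ↔ u.1 ≠ w.1 := by
    constructor
    · intro h he; exact h (Subtype.ext he)
    · intro h he; exact h (congrArg Subtype.val he)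
  rw [this]

lemma mul_self_mod_two (s : ℕ) : s * s % 2 = s % 2 := by
  rcases Nat.mod_two_eq_zero_or_one s with h | h <;>
    · rw [Nat.mul_mod, h]

lemma HpSize_two_mul {s : ℕ} (hs : 1 ≤ s) : 2 * HpSize s = s * s + 2 - s % 2 := by
  unfold HpSize
  have h1 : s * (s + 1) = s * s + s := by ring
  have h2 : s * s % 2 = s % 2 := mul_self_mod_two s
  rw [h1]
  omega

lemma gn_arith {n : ℕ} (hn : 3 ≤ n) :
    2 ≤ sqn n ∧ HpSize (sqn n) + En n = n ∧ En n ≤ sqn n ∧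
      (sqn n % 2 = 0 → En n + 1 ≤ sqn n) := by
  have h1 : sqn n * sqn n ≤ 2 * n - 1 := by
    have := Nat.sqrt_le' (2 * n - 1); rwa [pow_two] at this
  have h2 : 2 * n - 1 < (sqn n + 1) * (sqn n + 1) := by
    have := Nat.lt_succ_sqrt' (2 * n - 1)
    rwa [Nat.succ_eq_add_one, pow_two] at this
  have hs2 : 2 ≤ sqn n := Nat.le_sqrt.2 (by omega)
  have hmod : sqn n * sqn n % 2 = sqn n % 2 := mul_self_mod_two (sqn n)
  have hH : 2 * HpSize (sqn n) = sqn n * sqn n + 2 - sqn n % 2 :=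
    HpSize_two_mul (by omega)
  have hsq : (sqn n + 1) * (sqn n + 1) = sqn n * sqn n + 2 * sqn n + 1 := by ring
  have hEn : En n = n - HpSize (sqn n) := rfl
  refine ⟨hs2, ?_, ?_, ?_⟩ <;> omega

lemma sqn_eq (n : ℕ) : sqn n = Nat.sqrt (2 * n - 1) := rfl

attribute [irreducible] sqn En HpSize

set_option maxHeartbeats 1000000

open scoped Classical in
/-- Star assignment: each non-neighbor of `x` is assigned to a "line" with a common
neighbor in `N(x)`; neighbors of `x` (and `x` itself) get `0`. -/
noncomputable def sigmaP (n : ℕ) (x v : ℕ × ℕ) : ℕ :=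
  if v = x ∨ AdjP n v x then 0
  else if x.2 < v.2 ∧
      ¬(x.1 = x.2 ∧ v.2 = x.1 + 1 ∧ (x.1 + 1) % 2 = sqn n % 2 ∧ 3 ≤ x.1 + 1) then
    v.2 - 1
  else if x.1 = x.2 ∧ x.1 = 2 ∧ sqn n % 2 = 0 then v.1
  else if v.1 < x.1 then v.1 + 1
  else v.1

lemma sigma_spec (n : ℕ) (x v : ℕ × ℕ) :
    ((v = x ∨ AdjP n v x) ∧ sigmaP n x v = 0) ∨
    (¬(v = x ∨ AdjP n v x) ∧
      ((x.2 < v.2 ∧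
          ¬(x.1 = x.2 ∧ v.2 = x.1 + 1 ∧ (x.1 + 1) % 2 = sqn n % 2 ∧ 3 ≤ x.1 + 1) ∧
          sigmaP n x v = v.2 - 1) ∨
       (¬(x.2 < v.2 ∧ ¬(x.1 = x.2 ∧ v.2 = x.1 + 1 ∧ (x.1 + 1) % 2 = sqn n % 2 ∧ 3 ≤ x.1 + 1)) ∧
         ((x.1 = x.2 ∧ x.1 = 2 ∧ sqn n % 2 = 0 ∧ sigmaP n x v = v.1) ∨
          (¬(x.1 = x.2 ∧ x.1 = 2 ∧ sqn n % 2 = 0) ∧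
            ((v.1 < x.1 ∧ sigmaP n x v = v.1 + 1) ∨
             (¬(v.1 < x.1) ∧ sigmaP n x v = v.1))))))) := by
  unfold sigmaP
  split_ifs with h1 h2 h3 h4
  · exact Or.inl ⟨h1, rfl⟩
  · exact Or.inr ⟨h1, Or.inl ⟨h2.1, h2.2, rfl⟩⟩
  · exact Or.inr ⟨h1, Or.inr ⟨h2, Or.inl ⟨h3.1, h3.2.1, h3.2.2, rfl⟩⟩⟩
  · exact Or.inr ⟨h1, Or.inr ⟨h2, Or.inr ⟨h3, Or.inl ⟨h4, rfl⟩⟩⟩⟩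
  · exact Or.inr ⟨h1, Or.inr ⟨h2, Or.inr ⟨h3, Or.inr ⟨h4, rfl⟩⟩⟩⟩

lemma not_adj_elim {n : ℕ} {u x : ℕ × ℕ} (h : ¬(u = x ∨ AdjP n u x)) :
    u.1 ≠ x.1 ∧ u.2 ≠ x.2 ∧
    ¬(u.1 = u.2 ∧ x.1 = x.2 ∧ x.1 = u.1 + 1 ∧ x.1 % 2 = sqn n % 2 ∧ 3 ≤ x.1 ∧ x.1 ≤ sqn n) ∧
    ¬(x.1 = x.2 ∧ u.1 = u.2 ∧ u.1 = x.1 + 1 ∧ u.1 % 2 = sqn n % 2 ∧ 3 ≤ u.1 ∧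
        u.1 ≤ sqn n) := by
  push_neg at h
  obtain ⟨hne, hnadj⟩ := h
  unfold AdjP RelP at hnadj
  have hrel : ¬((u.1 = x.1 ∨ u.2 = x.2 ∨ _) ∨ (x.1 = u.1 ∨ x.2 = u.2 ∨ _)) :=
    fun h' => hnadj ⟨hne, h'⟩
  exact ⟨fun h1 => hrel (Or.inl (Or.inl h1)),
    fun h2 => hrel (Or.inl (Or.inr (Or.inl h2))),
    fun hs => hrel (Or.inl (Or.inr (Or.inr hs))),
    fun hs => hrel (Or.inr (Or.inr (Or.inr hs)))⟩

lemma sigma_zero_iff {n a b i j : ℕ} (hn : 3 ≤ n) (hx : VertP n (a, b)) (hv : VertP n (i, j)) :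
    sigmaP n (a, b) (i, j) = 0 ↔ ((i, j) = (a, b) ∨ AdjP n (i, j) (a, b)) := by
  rcases sigma_spec n (a, b) (i, j) with ⟨hmem, h0⟩ | ⟨h1, hbr⟩
  · exact ⟨fun _ => hmem, fun _ => h0⟩
  · refine ⟨fun h0 => ?_, fun h => absurd h h1⟩
    exfalso
    obtain ⟨hs2, hEH, hE1, hE2⟩ := gn_arith hn
    obtain ⟨hia, hjb, hsp1, hsp2⟩ := not_adj_elim h1
    clear h1
    unfold VertP at hv hx
    rcases hbr with ⟨hc1, hc2, hσ⟩ | ⟨hnc, ⟨hd1, hd2, hd3, hσ⟩ | ⟨hnd, ⟨hlt, hσ⟩ | ⟨hge, hσ⟩⟩⟩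
    · clear hv hsp1 hsp2 hjb hia hE2 hEH hs2
      omega
    · clear hx hsp1 hsp2 hia hE1 hEH hs2
      omega
    · clear hv hx hsp1 hsp2 hjb hia hnc hE1 hE2 hEH hs2
      omega
    · clear hv hx hsp1 hsp2 hjb hnc hE1 hE2 hEH hs2
      omega

lemma sigma_cases {n a b i j k : ℕ} (hn : 3 ≤ n) (hx : VertP n (a, b)) (hv : VertP n (i, j))
    (hk : sigmaP n (a, b) (i, j) = k) (hk0 : k ≠ 0) :
    ¬((i, j) = (a, b) ∨ AdjP n (i, j) (a, b)) ∧
    ((b < j ∧ k + 1 = j ∧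
        ¬(a = b ∧ j = a + 1 ∧ (a + 1) % 2 = sqn n % 2 ∧ 3 ≤ a + 1)) ∨
     (a = 2 ∧ b = 2 ∧ sqn n % 2 = 0 ∧ i = 1 ∧ j = 1 ∧ k = 1) ∨
     (¬(a = 2 ∧ b = 2 ∧ sqn n % 2 = 0) ∧
       ((i < a ∧ k = i + 1) ∨ (a < i ∧ k = i ∧ i < b)) ∧
       (j ≤ b ∨ (a = b ∧ j = a + 1 ∧ i < a ∧ (a + 1) % 2 = sqn n % 2 ∧ 3 ≤ a + 1)) ∧
       (k = b → a = b ∧ (a + 1) % 2 = sqn n % 2 ∧ 3 ≤ a + 1))) := by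
  rcases sigma_spec n (a, b) (i, j) with ⟨hmem, h0⟩ | ⟨h1, hbr⟩
  · exfalso; omega
  refine ⟨h1, ?_⟩
  obtain ⟨hs2, hEH, hE1, hE2⟩ := gn_arith hn
  obtain ⟨hia, hjb, hsp1, hsp2⟩ := not_adj_elim h1
  clear h1
  unfold VertP at hv hx
  rcases hbr with ⟨hc1, hc2, hσ⟩ | ⟨hnc, ⟨hd1, hd2, hd3, hσ⟩ | ⟨hnd, ⟨hlt, hσ⟩ | ⟨hge, hσ⟩⟩⟩
  · left
    clear hv hx hsp1 hsp2 hjb hia hE1 hE2 hEH hs2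
    omega
  · right; left
    clear hx hsp1 hsp2 hia hE1 hEH hs2
    omega
  · right; right
    clear hsp2 hia hE2 hEH hs2
    omega
  · right; right
    clear hsp1 hE2 hEH hs2
    omega

lemma sigma_le {n a b i j : ℕ} (hn : 3 ≤ n) (hx : VertP n (a, b)) (hv : VertP n (i, j)) :
    sigmaP n (a, b) (i, j) ≤ sqn n - 1 := by
  by_cases h0 : sigmaP n (a, b) (i, j) = 0
  · rw [h0]; exact Nat.zero_le _
  · obtain ⟨h1, hcase⟩ := sigma_cases hn hx hv rfl h0
    obtain ⟨hs2, hEH, hE1, hE2⟩ := gn_arith hn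
    unfold VertP at hv hx
    omega

lemma sigma_apex {n a b k : ℕ} (hn : 3 ≤ n) (hx : VertP n (a, b)) (hk0 : k ≠ 0)
    {i j : ℕ} (hv : VertP n (i, j)) (hk : sigmaP n (a, b) (i, j) = k) :
    ∃ w : ℕ × ℕ, VertP n w ∧ AdjP n w (a, b) ∧
      ∀ u : ℕ × ℕ, VertP n u → sigmaP n (a, b) u = k → AdjP n u w := by
  obtain ⟨hs2, hEH, hE1, hE2⟩ := gn_arith hn
  obtain ⟨hv1, hvc⟩ := sigma_cases hn hx hv hk hk0
  obtain ⟨hwia, hwjb, hwsp1, hwsp2⟩ := not_adj_elim hv1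
  have hx' := hx
  have hv' := hv
  unfold VertP at hx' hv'
  rcases hvc with ⟨hbj, hkj, hnd⟩ | ⟨ha2, hb2, hse, hi1, hj1, hk1⟩ | ⟨hns, halt, hlastj, hkb⟩
  · -- column fiber: all members have second coordinate k + 1
    by_cases ha : a = 0
    · have hw : VertP n (0, k + 1) := by
        unfold VertP; clear * - ha hx' hv' hbj hkj; omega
      have hwadj : AdjP n (0, k + 1) (a, b) := by
        refine ⟨?_, Or.inl ?_⟩
        · simp only [ne_eq, Prod.mk.injEq, not_and]; clear * - hbj hkj; omega
        · unfold RelP; clear * - ha; omega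
      refine ⟨(0, k + 1), hw, hwadj, ?_⟩
      intro u hu hku
      obtain ⟨hu1, huc⟩ := sigma_cases hn hx hu hku hk0
      have hune : u ≠ (0, k + 1) := fun he => hu1 (Or.inr (by rw [he]; exact hwadj))
      have hpin : u.2 = k + 1 := by clear * - huc ha hbj hkj hk0; omega
      exact ⟨hune, Or.inl (Or.inr (Or.inl hpin))⟩
    · have hw : VertP n (a, k + 1) := by
        unfold VertP; clear * - ha hx' hv' hbj hkj hnd; omega
      have hwadj : AdjP n (a, k + 1) (a, b) := by
        refine ⟨?_, Or.inl ?_⟩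
        · simp only [ne_eq, Prod.mk.injEq, not_and]; clear * - hbj hkj; omega
        · unfold RelP; exact Or.inl rfl
      refine ⟨(a, k + 1), hw, hwadj, ?_⟩
      intro u hu hku
      obtain ⟨hu1, huc⟩ := sigma_cases hn hx hu hku hk0
      have hune : u ≠ (a, k + 1) := fun he => hu1 (Or.inr (by rw [he]; exact hwadj))
      have hpin : u.2 = k + 1 := by clear * - huc ha hbj hkj hnd hx' hk0; omega
      exact ⟨hune, Or.inl (Or.inr (Or.inl hpin))⟩
  · -- special fiber at x = (2,2) with s even; apex (1,2), single member (1,1)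
    have hw : VertP n (1, 2) := by
      unfold VertP; clear * - hs2; omega
    have hwadj : AdjP n (1, 2) (a, b) := by
      refine ⟨?_, Or.inl ?_⟩
      · simp only [ne_eq, Prod.mk.injEq, not_and]; clear * - ha2; omega
      · unfold RelP; clear * - hb2; omega
    refine ⟨(1, 2), hw, hwadj, ?_⟩
    intro u hu hku
    obtain ⟨hu1, huc⟩ := sigma_cases hn hx hu hku hk0
    have hune : u ≠ (1, 2) := fun he => hu1 (Or.inr (by rw [he]; exact hwadj))
    have hpin : u.1 = 1 := by clear * - huc ha2 hb2 hse hk1; omega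
    exact ⟨hune, Or.inl (Or.inl hpin)⟩
  · -- row fiber: all members have first coordinate i
    by_cases hi0 : i = 0
    · by_cases hb0 : sqn n < b + En n
      · have hw : VertP n (0, b) := by
          unfold VertP; clear * - hx' hb0; omega
        have hwadj : AdjP n (0, b) (a, b) := by
          refine ⟨?_, Or.inl ?_⟩
          · simp only [ne_eq, Prod.mk.injEq, not_and]; clear * - halt hi0; omega
          · unfold RelP; exact Or.inr (Or.inl rfl)
        refine ⟨(0, b), hw, hwadj, ?_⟩
        intro u hu hku
        obtain ⟨hu1, huc⟩ := sigma_cases hn hx hu hku hk0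
        have hune : u ≠ (0, b) := fun he => hu1 (Or.inr (by rw [he]; exact hwadj))
        have hpin : u.1 = 0 := by clear * - huc halt hkb hns hi0 hx' hk0; omega
        exact ⟨hune, Or.inl (Or.inl hpin)⟩
      · -- all members are (0, a+1); apex (a+1, a+1) via the spine edge
        have hdg : a = b ∧ j = a + 1 ∧ (a + 1) % 2 = sqn n % 2 ∧ 3 ≤ a + 1 ∧
            a + 1 ≤ sqn n := by
          clear * - hlastj hv' hi0 hb0 halt; omega
        have hw : VertP n (a + 1, a + 1) := by
          unfold VertP; clear * - hdg; omega
        have hwadj : AdjP n (a + 1, a + 1) (a, b) := by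
          refine ⟨?_, Or.inr ?_⟩
          · simp only [ne_eq, Prod.mk.injEq, not_and]; clear * - hdg; omega
          · unfold RelP; clear * - hdg; omega
        refine ⟨(a + 1, a + 1), hw, hwadj, ?_⟩
        intro u hu hku
        obtain ⟨hu1, huc⟩ := sigma_cases hn hx hu hku hk0
        have hune : u ≠ (a + 1, a + 1) := fun he => hu1 (Or.inr (by rw [he]; exact hwadj))
        have hu' := hu
        unfold VertP at hu'
        have hpin1 : u.1 = 0 := by clear * - huc halt hkb hns hi0 hx' hk0; omega
        have hpin : u.2 = a + 1 := by clear * - huc hu' hb0 hpin1 hdg hE1 halt hkb hns hx' hk0; omega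
        exact ⟨hune, Or.inl (Or.inr (Or.inl hpin))⟩
    · by_cases hdel : b = i + 1 ∧ b % 2 = sqn n % 2 ∧ 3 ≤ b
      · have hab : a ≠ b := by
          clear * - hdel halt hlastj hv' hwsp1 hwjb hx' hi0; omega
        have hw : VertP n (b, b) := by
          unfold VertP; clear * - hdel hx'; omega
        have hwadj : AdjP n (b, b) (a, b) := by
          refine ⟨?_, Or.inl ?_⟩
          · simp only [ne_eq, Prod.mk.injEq, not_and]; clear * - hab; omega
          · unfold RelP; exact Or.inr (Or.inl rfl)
        refine ⟨(b, b), hw, hwadj, ?_⟩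
        intro u hu hku
        obtain ⟨hu1, huc⟩ := sigma_cases hn hx hu hku hk0
        have hune : u ≠ (b, b) := fun he => hu1 (Or.inr (by rw [he]; exact hwadj))
        have hu' := hu
        unfold VertP at hu'
        have hpin1 : u.1 = i := by clear * - huc halt hkb hns hi0 hx' hk0; omega
        have hpin2 : u.2 = i := by clear * - huc hu' hab hdel hpin1 hi0 halt hkb hns hx' hk0; omega
        refine ⟨hune, Or.inl ?_⟩
        unfold RelP
        clear * - hpin1 hpin2 hdel hx'
        omega
      · have hw : VertP n (i, b) := by
          unfold VertP; clear * - hi0 halt hx' hdel; omega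
        have hwadj : AdjP n (i, b) (a, b) := by
          refine ⟨?_, Or.inl ?_⟩
          · simp only [ne_eq, Prod.mk.injEq, not_and]; clear * - halt; omega
          · unfold RelP; exact Or.inr (Or.inl rfl)
        refine ⟨(i, b), hw, hwadj, ?_⟩
        intro u hu hku
        obtain ⟨hu1, huc⟩ := sigma_cases hn hx hu hku hk0
        have hune : u ≠ (i, b) := fun he => hu1 (Or.inr (by rw [he]; exact hwadj))
        have hpin : u.1 = i := by clear * - huc halt hkb hns hi0 hx' hk0; omega
        exact ⟨hune, Or.inl (Or.inl hpin)⟩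

/-- For every `n ≥ 3`, `ρ(Gₙ) ≤ ⌊√(2n-1)⌋ + 2`. -/
theorem rubblingNumber_GnGraph_le (n : ℕ) (hn : 3 ≤ n) :
    rubblingNumber (GnGraph n) ≤ Nat.sqrt (2 * n - 1) + 2 := by
  obtain ⟨hs2, hEH, hE1, hE2⟩ := gn_arith hn
  refine Nat.sInf_le ?_
  simp only [Set.mem_setOf_eq]
  intro p hp x
  obtain ⟨⟨a, b⟩, hxmem⟩ := x
  have hxV : VertP n (a, b) := mem_GnVerts.1 hxmem
  refine master (GnGraph n) (sqn n - 1) (fun v => sigmaP n (a, b) v.1) ?_ ?_ ?_ p ?_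
  · rintro ⟨⟨i, j⟩, hvmem⟩
    exact (sigma_zero_iff hn hxV (mem_GnVerts.1 hvmem)).trans
      (or_congr ⟨fun h => Subtype.ext h, fun h => congrArg Subtype.val h⟩
        (adjP_iff ⟨(i, j), hvmem⟩ ⟨(a, b), hxmem⟩).symm)
  · rintro ⟨⟨i, j⟩, hvmem⟩
    exact sigma_le hn hxV (mem_GnVerts.1 hvmem)
  · intro k hk0 v hkv
    obtain ⟨⟨i, j⟩, hvmem⟩ := v
    obtain ⟨w, hwV, hwadj, hmem⟩ := sigma_apex hn hxV hk0 (mem_GnVerts.1 hvmem) hkv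
    refine ⟨⟨w, mem_GnVerts.2 hwV⟩, (adjP_iff _ _).2 hwadj, ?_⟩
    rintro ⟨u, humem⟩ hku
    exact (adjP_iff _ _).2 (hmem u (mem_GnVerts.1 humem) hku)
  · rw [hp, ← sqn_eq n]; omega
end

section
/- For every n ≥ 3, the graph G_n satisfies ρ(G_n) > ⌊√(2n − 1)⌋ + 1. -/
open Finset

variable {V : Type*}

inductive Deriv (G : SimpleGraph V) : Multiset V → V → Prop
  | leaf (x : V) : Deriv G {x} x
  | node {m₁ m₂ : Multiset V} {v w u : V} (hv : G.Adj v u) (hw : G.Adj w u)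
      (h₁ : Deriv G m₁ v) (h₂ : Deriv G m₂ w) : Deriv G (m₁ + m₂) u

lemma Deriv.subst [DecidableEq V] {G : SimpleGraph V} {m : Multiset V} {x : V}
    (h : Deriv G m x) : ∀ u ∈ m, ∀ m' : Multiset V, Deriv G m' u →
      Deriv G (m.erase u + m') x := by
  induction h with
  | leaf y =>
    intro u hu m' hm'
    rw [Multiset.mem_singleton] at hu
    subst hu
    simpa using hm'
  | @node m₁ m₂ v' w' u' hv hw h₁ h₂ ih₁ ih₂ =>
    intro u hu m' hm'
    rw [Multiset.mem_add] at hu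
    rcases hu with hu | hu
    · have hres := Deriv.node hv hw (ih₁ u hu m' hm') h₂
      rw [Multiset.erase_add_left_pos m₂ hu]
      convert hres using 1
      abel
    · have hres := Deriv.node hv hw h₁ (ih₂ u hu m' hm')
      rw [Multiset.erase_add_right_pos m₁ hu]
      convert hres using 1
      abel

lemma reach_deriv [DecidableEq V] {G : SimpleGraph V} {p : V → ℕ} {x : V}
    (h : RubblingReachable G p x) :
    ∃ m : Multiset V, Deriv G m x ∧ ∀ v, m.count v ≤ p v := by
  obtain ⟨q, hpq, hqx⟩ := h
  induction hpq using Relation.ReflTransGen.head_induction_on with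
  | refl =>
    refine ⟨{x}, Deriv.leaf x, fun v => ?_⟩
    rw [Multiset.count_singleton]
    split
    · next h' => subst h'; exact hqx
    · exact Nat.zero_le _
  | head hmove _ ih =>
    rename_i p₁ p₂ _
    obtain ⟨m, hm, hc⟩ := ih
    rcases hmove with ⟨v, u, hadj, hpv, hv', hu', hz⟩ |
      ⟨v, w, u, hvw, hav, haw, h1v, h1w, hv', hw', hu', hz⟩
    · -- pebbling move
      have hvu : v ≠ u := hadj.ne
      by_cases hcu : m.count u ≤ p₁ u
      · refine ⟨m, hm, fun z => ?_⟩
        by_cases h1 : z = u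
        · rw [h1]; exact hcu
        by_cases h2 : z = v
        · rw [h2]; have := hc v; rw [hv'] at this; omega
        · have := hc z; rw [hz z h2 h1] at this; exact this
      · have hum : u ∈ m := by
          rw [← Multiset.one_le_count_iff_mem]
          omega
        refine ⟨m.erase u + {v, v}, ?_, fun z => ?_⟩
        · exact hm.subst u hum _ (Deriv.node hadj hadj (Deriv.leaf v) (Deriv.leaf v))
        · rw [Multiset.count_add]
          by_cases h1 : z = u
          · rw [h1, Multiset.count_erase_self]
            have h2 := hc u; rw [hu'] at h2
            have h3 : Multiset.count u ({v, v} : Multiset V) = 0 := by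
              simp [Multiset.count_cons, Multiset.count_singleton, hvu.symm]
            omega
          · rw [Multiset.count_erase_of_ne h1]
            by_cases h2 : z = v
            · rw [h2]
              have h3 := hc v; rw [hv'] at h3
              have h4 : Multiset.count v ({v, v} : Multiset V) = 2 := by
                simp [Multiset.count_cons, Multiset.count_singleton]
              omega
            · have h3 := hc z; rw [hz z h2 h1] at h3
              have h4 : Multiset.count z ({v, v} : Multiset V) = 0 := by
                simp [Multiset.count_cons, Multiset.count_singleton, h2]
              omega
    · -- strict rubbling move
      have hvu : v ≠ u := hav.ne
      have hwu : w ≠ u := haw.ne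
      by_cases hcu : m.count u ≤ p₁ u
      · refine ⟨m, hm, fun z => ?_⟩
        by_cases h1 : z = u
        · rw [h1]; exact hcu
        by_cases h2 : z = v
        · rw [h2]; have := hc v; rw [hv'] at this; omega
        by_cases h3 : z = w
        · rw [h3]; have := hc w; rw [hw'] at this; omega
        · have := hc z; rw [hz z h2 h3 h1] at this; exact this
      · have hum : u ∈ m := by rw [← Multiset.one_le_count_iff_mem]; omega
        refine ⟨m.erase u + {v, w}, ?_, fun z => ?_⟩
        · exact hm.subst u hum _ (Deriv.node hav haw (Deriv.leaf v) (Deriv.leaf w))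
        · rw [Multiset.count_add]
          by_cases h1 : z = u
          · rw [h1, Multiset.count_erase_self]
            have h2 := hc u; rw [hu'] at h2
            have h3 : Multiset.count u ({v, w} : Multiset V) = 0 := by
              simp [Multiset.count_cons, Multiset.count_singleton, hvu.symm, hwu.symm]
            omega
          · rw [Multiset.count_erase_of_ne h1]
            by_cases h2 : z = v
            · rw [h2]
              have h3 := hc v; rw [hv'] at h3
              have h4 : Multiset.count v ({v, w} : Multiset V) = 1 := by
                simp [Multiset.count_cons, Multiset.count_singleton, hvw]
              omega
            by_cases h3 : z = w
            · rw [h3]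
              have h4 := hc w; rw [hw'] at h4
              have h5 : Multiset.count w ({v, w} : Multiset V) = 1 := by
                simp [Multiset.count_cons, Multiset.count_singleton, hvw.symm]
              omega
            · have h4 := hc z; rw [hz z h2 h3 h1] at h4
              have h5 : Multiset.count z ({v, w} : Multiset V) = 0 := by
                simp [Multiset.count_cons, Multiset.count_singleton, h2, h3]
              omega

abbrev Vn (n : ℕ) := {v : ℕ × ℕ // v ∈ GnVerts n}

lemma mem_GnVerts_iff {n : ℕ} {z : ℕ × ℕ} : z ∈ GnVerts n ↔
    (z.1 < Nat.sqrt (2 * n - 1) + 1 ∧ z.2 < Nat.sqrt (2 * n - 1) + 1) ∧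
    ((1 ≤ z.1 ∧ z.1 ≤ z.2 ∧ z.2 ≤ Nat.sqrt (2 * n - 1) ∧
        ¬(z.2 = z.1 + 1 ∧ z.2 % 2 = Nat.sqrt (2 * n - 1) % 2 ∧ 3 ≤ z.2)) ∨
      (z.1 = 0 ∧ z.2 ≤ Nat.sqrt (2 * n - 1) ∧
        Nat.sqrt (2 * n - 1) < z.2 + (n - HpSize (Nat.sqrt (2 * n - 1))))) := by
  simp [GnVerts, Finset.mem_filter, Finset.mem_product, Finset.mem_range]

lemma vert_le {n : ℕ} (v : Vn n) : v.1.1 ≤ v.1.2 ∧ v.1.2 ≤ Nat.sqrt (2 * n - 1) := by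
  have h := v.2
  rw [mem_GnVerts_iff] at h
  omega

lemma diag_mem {n : ℕ} {i : ℕ} (h1 : 1 ≤ i) (h2 : i ≤ Nat.sqrt (2 * n - 1)) :
    ((i, i) : ℕ × ℕ) ∈ GnVerts n := by
  rw [mem_GnVerts_iff]
  refine ⟨⟨by omega, by omega⟩, Or.inl ⟨h1, le_rfl, h2, by omega⟩⟩

lemma adj_cases {n : ℕ} {u v : Vn n} (h : (GnGraph n).Adj u v) :
    u.1.1 = v.1.1 ∨ u.1.2 = v.1.2 ∨
    (u.1.1 = u.1.2 ∧ v.1.1 = v.1.2 ∧ v.1.1 = u.1.1 + 1 ∧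
      v.1.1 % 2 = Nat.sqrt (2 * n - 1) % 2 ∧ 3 ≤ v.1.1 ∧ v.1.1 ≤ Nat.sqrt (2 * n - 1)) ∨
    (u.1.1 = u.1.2 ∧ v.1.1 = v.1.2 ∧ u.1.1 = v.1.1 + 1 ∧
      u.1.1 % 2 = Nat.sqrt (2 * n - 1) % 2 ∧ 3 ≤ u.1.1 ∧ u.1.1 ≤ Nat.sqrt (2 * n - 1)) := by
  rw [GnGraph, SimpleGraph.fromRel_adj] at h
  tauto

lemma adj_of {n : ℕ} {u v : Vn n} (hne : u.1 ≠ v.1)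
    (h : u.1.1 = v.1.1 ∨ u.1.2 = v.1.2 ∨
      (u.1.1 = u.1.2 ∧ v.1.1 = v.1.2 ∧ v.1.1 = u.1.1 + 1 ∧
        v.1.1 % 2 = Nat.sqrt (2 * n - 1) % 2 ∧ 3 ≤ v.1.1 ∧ v.1.1 ≤ Nat.sqrt (2 * n - 1))) :
    (GnGraph n).Adj u v := by
  rw [GnGraph, SimpleGraph.fromRel_adj]
  exact ⟨fun he => hne (by rw [he]), by tauto⟩

lemma derivRootInv {n : ℕ} {m : Multiset (Vn n)} {r : Vn n}
    (hd : Deriv (GnGraph n) m r)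
    (hm : ∀ v ∈ m, v.1.2 = v.1.1 ∧ 2 ≤ v.1.1)
    (hc : ∀ v, m.count v ≤ 1) :
    2 ≤ r.1.1 ∧ (∃ a ∈ m, a.1 = (r.1.1, r.1.1)) ∧ (∃ b ∈ m, b.1 = (r.1.2, r.1.2)) := by
  induction hd with
  | leaf x =>
    obtain ⟨h1, h2⟩ := hm x (Multiset.mem_singleton_self x)
    exact ⟨h2, ⟨x, Multiset.mem_singleton_self x, Prod.ext rfl h1⟩,
      ⟨x, Multiset.mem_singleton_self x, Prod.ext h1.symm rfl⟩⟩
  | @node m₁ m₂ v w u hv hw h₁ h₂ ih₁ ih₂ =>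
    have hm₁ : ∀ z ∈ m₁, z.1.2 = z.1.1 ∧ 2 ≤ z.1.1 :=
      fun z hz => hm z (Multiset.mem_add.2 (Or.inl hz))
    have hm₂ : ∀ z ∈ m₂, z.1.2 = z.1.1 ∧ 2 ≤ z.1.1 :=
      fun z hz => hm z (Multiset.mem_add.2 (Or.inr hz))
    have hc₁ : ∀ z, m₁.count z ≤ 1 := fun z => by
      have := hc z; rw [Multiset.count_add] at this; omega
    have hc₂ : ∀ z, m₂.count z ≤ 1 := fun z => by
      have := hc z; rw [Multiset.count_add] at this; omega
    obtain ⟨h2a, ⟨ea, hea, heav⟩, ⟨eb, heb, hebv⟩⟩ := ih₁ hm₁ hc₁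
    obtain ⟨h2c, ⟨ec, hec, hecv⟩, ⟨ed, hed, hedv⟩⟩ := ih₂ hm₂ hc₂
    have hab := vert_le v
    have hcd := vert_le w
    have hxy := vert_le u
    have hdisj : ∀ i : ℕ, (∃ e ∈ m₁, e.1 = (i, i)) → ∀ j : ℕ, (∃ e ∈ m₂, e.1 = (j, j)) →
        i ≠ j := by
      rintro i ⟨e1, he1, hv1⟩ j ⟨e2, he2, hv2⟩ rfl
      have he : e1 = e2 := Subtype.ext (hv1.trans hv2.symm)
      subst he
      have hcnt := hc e1
      rw [Multiset.count_add] at hcnt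
      have hx1 := Multiset.one_le_count_iff_mem.2 he1
      have hx2 := Multiset.one_le_count_iff_mem.2 he2
      omega
    have hac : v.1.1 ≠ w.1.1 := hdisj _ ⟨ea, hea, heav⟩ _ ⟨ec, hec, hecv⟩
    have had : v.1.1 ≠ w.1.2 := hdisj _ ⟨ea, hea, heav⟩ _ ⟨ed, hed, hedv⟩
    have hbc : v.1.2 ≠ w.1.1 := hdisj _ ⟨eb, heb, hebv⟩ _ ⟨ec, hec, hecv⟩
    have hbd : v.1.2 ≠ w.1.2 := hdisj _ ⟨eb, heb, hebv⟩ _ ⟨ed, hed, hedv⟩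
    have mea : ea ∈ m₁ + m₂ := Multiset.mem_add.2 (Or.inl hea)
    have meb : eb ∈ m₁ + m₂ := Multiset.mem_add.2 (Or.inl heb)
    have mec : ec ∈ m₁ + m₂ := Multiset.mem_add.2 (Or.inr hec)
    have med : ed ∈ m₁ + m₂ := Multiset.mem_add.2 (Or.inr hed)
    rcases adj_cases hv with h1 | h1 | h1 | h1 <;> rcases adj_cases hw with h2 | h2 | h2 | h2
    · exfalso; omega
    · exact ⟨by omega,
        ⟨ea, mea, by rw [heav]; exact congrArg (fun t => (t, t)) (by omega : v.1.1 = u.1.1)⟩,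
        ⟨ed, med, by rw [hedv]; exact congrArg (fun t => (t, t)) (by omega : w.1.2 = u.1.2)⟩⟩
    · exact ⟨by omega,
        ⟨ea, mea, by rw [heav]; exact congrArg (fun t => (t, t)) (by omega : v.1.1 = u.1.1)⟩,
        ⟨ea, mea, by rw [heav]; exact congrArg (fun t => (t, t)) (by omega : v.1.1 = u.1.2)⟩⟩
    · exact ⟨by omega,
        ⟨ea, mea, by rw [heav]; exact congrArg (fun t => (t, t)) (by omega : v.1.1 = u.1.1)⟩,
        ⟨ea, mea, by rw [heav]; exact congrArg (fun t => (t, t)) (by omega : v.1.1 = u.1.2)⟩⟩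
    · exact ⟨by omega,
        ⟨ec, mec, by rw [hecv]; exact congrArg (fun t => (t, t)) (by omega : w.1.1 = u.1.1)⟩,
        ⟨eb, meb, by rw [hebv]; exact congrArg (fun t => (t, t)) (by omega : v.1.2 = u.1.2)⟩⟩
    · exfalso; omega
    · exact ⟨by omega,
        ⟨eb, meb, by rw [hebv]; exact congrArg (fun t => (t, t)) (by omega : v.1.2 = u.1.1)⟩,
        ⟨eb, meb, by rw [hebv]; exact congrArg (fun t => (t, t)) (by omega : v.1.2 = u.1.2)⟩⟩
    · exact ⟨by omega,
        ⟨eb, meb, by rw [hebv]; exact congrArg (fun t => (t, t)) (by omega : v.1.2 = u.1.1)⟩,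
        ⟨eb, meb, by rw [hebv]; exact congrArg (fun t => (t, t)) (by omega : v.1.2 = u.1.2)⟩⟩
    · exact ⟨by omega,
        ⟨ec, mec, by rw [hecv]; exact congrArg (fun t => (t, t)) (by omega : w.1.1 = u.1.1)⟩,
        ⟨ec, mec, by rw [hecv]; exact congrArg (fun t => (t, t)) (by omega : w.1.1 = u.1.2)⟩⟩
    · exact ⟨by omega,
        ⟨ed, med, by rw [hedv]; exact congrArg (fun t => (t, t)) (by omega : w.1.2 = u.1.1)⟩,
        ⟨ed, med, by rw [hedv]; exact congrArg (fun t => (t, t)) (by omega : w.1.2 = u.1.2)⟩⟩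
    · exfalso; omega
    · exfalso; omega
    · exact ⟨by omega,
        ⟨ec, mec, by rw [hecv]; exact congrArg (fun t => (t, t)) (by omega : w.1.1 = u.1.1)⟩,
        ⟨ec, mec, by rw [hecv]; exact congrArg (fun t => (t, t)) (by omega : w.1.1 = u.1.2)⟩⟩
    · exact ⟨by omega,
        ⟨ed, med, by rw [hedv]; exact congrArg (fun t => (t, t)) (by omega : w.1.2 = u.1.1)⟩,
        ⟨ed, med, by rw [hedv]; exact congrArg (fun t => (t, t)) (by omega : w.1.2 = u.1.2)⟩⟩
    · exfalso; omega
    · exfalso; omega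

def pz (n : ℕ) (z : ℕ × ℕ) : ℕ :=
  if z.2 = z.1 then
    (if z.1 = Nat.sqrt (2 * n - 1) then 3 else if 2 ≤ z.1 then 1 else 0)
  else 0

lemma pz_pos_facts {n : ℕ} (hs : 2 ≤ Nat.sqrt (2 * n - 1)) {z : ℕ × ℕ} (h : 0 < pz n z) :
    z.2 = z.1 ∧ 2 ≤ z.1 := by
  unfold pz at h
  split at h
  · next h1 =>
    refine ⟨h1, ?_⟩
    split at h
    · omega
    · split at h <;> omega
  · omega

lemma pz_le_one {n : ℕ} {z : ℕ × ℕ} (h : z ≠ (Nat.sqrt (2 * n - 1), Nat.sqrt (2 * n - 1))) :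
    pz n z ≤ 1 := by
  unfold pz
  split
  · next h1 =>
    split
    · next h2 =>
      exfalso
      apply h
      have : z = (z.1, z.2) := rfl
      rw [this, h1, h2]
    · split <;> omega
  · omega

lemma not_deriv_target {n : ℕ} (hs : 2 ≤ Nat.sqrt (2 * n - 1)) {m : Multiset (Vn n)}
    {x₀ : Vn n} (hx₀ : x₀.1 = (1, 1))
    (hd : Deriv (GnGraph n) m x₀) (hcount : ∀ v : Vn n, m.count v ≤ pz n v.1) : False := by
  cases hd with
  | leaf =>
    have h1 := hcount x₀
    rw [Multiset.count_singleton, if_pos rfl] at h1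
    rw [hx₀] at h1
    unfold pz at h1
    split at h1
    · split at h1
      · next h2 => exact absurd h2 (by omega)
      · split at h1 <;> omega
    · next h2 => exact h2 rfl
  | @node m₁ m₂ v w u hv hw h₁ h₂ =>
    have hσm : ((Nat.sqrt (2 * n - 1), Nat.sqrt (2 * n - 1)) : ℕ × ℕ) ∈ GnVerts n :=
      diag_mem (by omega) le_rfl
    set σ : Vn n := ⟨(Nat.sqrt (2 * n - 1), Nat.sqrt (2 * n - 1)), hσm⟩ with hσ
    have key : ∀ (mm : Multiset (Vn n)) (z : Vn n), Deriv (GnGraph n) mm z →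
        (∀ t : Vn n, mm.count t ≤ m₁.count t + m₂.count t) →
        (GnGraph n).Adj z x₀ → 2 ≤ mm.count σ := by
      intro mm z hdz hmm hadj
      by_contra hlt
      have hle : ∀ t : Vn n, mm.count t ≤ 1 := by
        intro t
        by_cases ht : t = σ
        · rw [ht]; omega
        · have h5 := hcount t
          have h6 : pz n t.1 ≤ 1 := by
            apply pz_le_one
            intro hc
            exact ht (Subtype.ext hc)
          have h7 := hmm t
          have h8 := hcount t
          rw [Multiset.count_add] at h8
          omega
      have hmem : ∀ t ∈ mm, t.1.2 = t.1.1 ∧ 2 ≤ t.1.1 := by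
        intro t htm
        have h5 : 1 ≤ mm.count t := Multiset.one_le_count_iff_mem.2 htm
        have h7 := hmm t
        have h8 := hcount t
        rw [Multiset.count_add] at h8
        have h9 : 0 < pz n t.1 := by omega
        exact pz_pos_facts hs h9
      obtain ⟨h2z, _, _⟩ := derivRootInv hdz hmem hle
      have hza := vert_le z
      have hx1 : x₀.1.1 = 1 := by rw [hx₀]
      have hx2 : x₀.1.2 = 1 := by rw [hx₀]
      rcases adj_cases hadj with h5 | h5 | h5 | h5 <;> omega
    have hm₁ : ∀ t : Vn n, m₁.count t ≤ m₁.count t + m₂.count t := fun t => by omega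
    have hm₂ : ∀ t : Vn n, m₂.count t ≤ m₁.count t + m₂.count t := fun t => by omega
    have k1 := key m₁ v h₁ hm₁ hv
    have k2 := key m₂ w h₂ hm₂ hw
    have h5 := hcount σ
    rw [Multiset.count_add] at h5
    have h6 : pz n σ.1 = 3 := by
      unfold pz
      rw [if_pos rfl, if_pos rfl]
    omega

lemma shrink {α : Type*} [Fintype α] [DecidableEq α] {p : α → ℕ} {m : ℕ}
    (h : m ≤ ∑ v, p v) :
    ∃ p' : α → ℕ, (∀ v, p' v ≤ p v) ∧ ∑ v, p' v = m := by
  obtain ⟨k, hk⟩ : ∃ k, ∑ v, p v = m + k := ⟨∑ v, p v - m, by omega⟩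
  clear h
  induction k generalizing p with
  | zero => exact ⟨p, fun v => le_rfl, by omega⟩
  | succ k ih =>
    have hpos : 0 < ∑ v, p v := by omega
    obtain ⟨v, hv⟩ : ∃ v, 0 < p v := by
      by_contra hno
      push_neg at hno
      have h0 : ∑ v, p v = 0 := Finset.sum_eq_zero (fun v _ => by have := hno v; omega)
      omega
    have hsum2 : ∑ u, Function.update p v (p v - 1) u = m + k := by
      rw [Finset.sum_update_of_mem (Finset.mem_univ v)]
      have h7 : ∑ x ∈ Finset.univ \ {v}, p x + p v = ∑ x ∈ Finset.univ, p x := by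
        rw [Finset.sdiff_singleton_eq_erase]
        exact Finset.sum_erase_add _ p (Finset.mem_univ v)
      omega
    obtain ⟨p', h1, h2⟩ := ih hsum2
    refine ⟨p', fun u => (h1 u).trans ?_, h2⟩
    by_cases hu : u = v
    · rw [hu, Function.update_self]; omega
    · rw [Function.update_of_ne hu]

lemma sum_pz {n : ℕ} (hs : 2 ≤ Nat.sqrt (2 * n - 1)) :
    ∑ v : Vn n, pz n v.1 = Nat.sqrt (2 * n - 1) + 1 := by
  rw [Finset.univ_eq_attach, Finset.sum_attach (GnVerts n) (pz n)]
  rw [← Finset.sum_subset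
      (s₁ := (Finset.Icc 2 (Nat.sqrt (2 * n - 1))).image (fun i => (i, i)))
      (by
        intro x hx
        rw [Finset.mem_image] at hx
        obtain ⟨i, hi, rfl⟩ := hx
        rw [Finset.mem_Icc] at hi
        exact diag_mem (by omega) hi.2)
      (by
        intro x hx hnx
        by_contra hne
        have h9 : 0 < pz n x := by omega
        obtain ⟨h1, h2⟩ := pz_pos_facts hs h9
        apply hnx
        rw [Finset.mem_image]
        have hle : x.1 ≤ Nat.sqrt (2 * n - 1) := by
          rw [mem_GnVerts_iff] at hx
          omega
        exact ⟨x.1, Finset.mem_Icc.2 ⟨h2, hle⟩, Prod.ext rfl h1.symm⟩)]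
  rw [Finset.sum_image (by intro a _ b _ hab; exact (Prod.ext_iff.1 hab).1)]
  have hcongr : ∀ i ∈ Finset.Icc 2 (Nat.sqrt (2 * n - 1)),
      pz n (i, i) = 1 + (if i = Nat.sqrt (2 * n - 1) then 2 else 0) := by
    intro i hi
    rw [Finset.mem_Icc] at hi
    unfold pz
    rw [if_pos rfl]
    simp only
    split
    · rfl
    · rw [if_pos hi.1]
  rw [Finset.sum_congr rfl hcongr, Finset.sum_add_distrib]
  rw [Finset.sum_ite_eq' (Finset.Icc 2 (Nat.sqrt (2 * n - 1))) (Nat.sqrt (2 * n - 1))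
      (fun _ => 2)]
  rw [if_pos (Finset.mem_Icc.2 ⟨hs, le_rfl⟩)]
  simp only [Finset.sum_const, smul_eq_mul, mul_one, Nat.card_Icc]
  omega

lemma adj_or_common_aux {n : ℕ} (u w : Vn n) (hne : u.1 ≠ w.1) (hbd : u.1.2 ≤ w.1.2) :
    (GnGraph n).Adj u w ∨ ∃ r : Vn n, (GnGraph n).Adj u r ∧ (GnGraph n).Adj w r := by
  by_cases heq2 : u.1.2 = w.1.2
  · exact Or.inl (adj_of hne (Or.inr (Or.inl heq2)))
  by_cases heq1 : u.1.1 = w.1.1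
  · exact Or.inl (adj_of hne (Or.inl heq1))
  have hu := u.2
  have hw := w.2
  rw [mem_GnVerts_iff] at hu hw
  have hblt : u.1.2 < w.1.2 := by omega
  by_cases hu0 : u.1.1 = 0
  · -- u = (0, b), w = (c, d) with c ≥ 1 (c ≠ 0 since a = 0 ≠ c), b < d; take r = (0, d)
    have hrm : ((0, w.1.2) : ℕ × ℕ) ∈ GnVerts n := by
      rw [mem_GnVerts_iff]
      exact ⟨by omega, Or.inr ⟨rfl, by omega, by omega⟩⟩
    refine Or.inr ⟨⟨(0, w.1.2), hrm⟩, adj_of (by simp [Prod.ext_iff]; omega) (Or.inl (by simp [hu0])),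
      adj_of (by simp [Prod.ext_iff]; omega) (Or.inr (Or.inl (by simp)))⟩
  by_cases hw0 : w.1.1 = 0
  · -- u = (a, b) with a ≥ 1, w = (0, d), b < d
    by_cases hdel : w.1.2 = u.1.1 + 1 ∧ w.1.2 % 2 = Nat.sqrt (2 * n - 1) % 2 ∧ 3 ≤ w.1.2
    · -- (a, d) is deleted; then b = a and r = (d, d), spine-adjacent to u = (a,a)
      have hba : u.1.2 = u.1.1 := by omega
      have hrm : ((w.1.2, w.1.2) : ℕ × ℕ) ∈ GnVerts n := diag_mem (by omega) (by omega)
      refine Or.inr ⟨⟨(w.1.2, w.1.2), hrm⟩,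
        adj_of (by simp [Prod.ext_iff]; omega) (Or.inr (Or.inr ⟨by omega, by simp, by simp [Prod.ext_iff]; omega⟩)),
        adj_of (by simp [Prod.ext_iff]; omega) (Or.inr (Or.inl (by simp)))⟩
    · -- r = (a, d)
      have hrm : ((u.1.1, w.1.2) : ℕ × ℕ) ∈ GnVerts n := by
        rw [mem_GnVerts_iff]
        exact ⟨by omega, Or.inl ⟨by omega, by omega, by omega, by simp [Prod.ext_iff]; omega⟩⟩
      refine Or.inr ⟨⟨(u.1.1, w.1.2), hrm⟩, adj_of (by simp [Prod.ext_iff]; omega) (Or.inl (by simp)),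
        adj_of (by simp [Prod.ext_iff]; omega) (Or.inr (Or.inl (by simp)))⟩
  · -- both rows ≥ 1
    by_cases hdel : w.1.2 = u.1.1 + 1 ∧ w.1.2 % 2 = Nat.sqrt (2 * n - 1) % 2 ∧ 3 ≤ w.1.2
    · -- (a, d) deleted: b = a, d = a + 1, c ≤ d, c ≠ a
      have hba : u.1.2 = u.1.1 := by omega
      by_cases hc : w.1.1 = u.1.1 + 1
      · -- w = (d, d) itself, spine-adjacent to u
        have hwd : w.1.1 = w.1.2 := by omega
        exact Or.inl (adj_of hne (Or.inr (Or.inr ⟨by omega, by omega, by omega,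
          by omega, by omega, by omega⟩)))
      · -- c < a; r = (c, a)
        have hclt : w.1.1 < u.1.1 := by omega
        have hrm : ((w.1.1, u.1.1) : ℕ × ℕ) ∈ GnVerts n := by
          rw [mem_GnVerts_iff]
          exact ⟨by omega, Or.inl ⟨by omega, by omega, by omega, by simp [Prod.ext_iff]; omega⟩⟩
        refine Or.inr ⟨⟨(w.1.1, u.1.1), hrm⟩,
          adj_of (by simp [Prod.ext_iff]; omega) (Or.inr (Or.inl (by simp [Prod.ext_iff]; omega))),
          adj_of (by simp [Prod.ext_iff]; omega) (Or.inl (by simp))⟩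
    · -- r = (a, d)
      have hrm : ((u.1.1, w.1.2) : ℕ × ℕ) ∈ GnVerts n := by
        rw [mem_GnVerts_iff]
        exact ⟨by omega, Or.inl ⟨by omega, by omega, by omega, by simp [Prod.ext_iff]; omega⟩⟩
      refine Or.inr ⟨⟨(u.1.1, w.1.2), hrm⟩, adj_of (by simp [Prod.ext_iff]; omega) (Or.inl (by simp)),
        adj_of (by simp [Prod.ext_iff]; omega) (Or.inr (Or.inl (by simp)))⟩

lemma adj_or_common {n : ℕ} (u w : Vn n) (hne : u ≠ w) :
    (GnGraph n).Adj u w ∨ ∃ r : Vn n, (GnGraph n).Adj u r ∧ (GnGraph n).Adj w r := by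
  have hne' : u.1 ≠ w.1 := fun h => hne (Subtype.ext h)
  rcases le_total u.1.2 w.1.2 with h | h
  · exact adj_or_common_aux u w hne' h
  · rcases adj_or_common_aux w u (Ne.symm hne') h with h1 | ⟨r, h1, h2⟩
    · exact Or.inl h1.symm
    · exact Or.inr ⟨r, h2, h1⟩

lemma pebbling_step {W : Type*} {G : SimpleGraph W} (p : W → ℕ) {v u : W}
    (h : G.Adj v u) (h2 : 2 ≤ p v) [DecidableEq W] :
    IsRubblingMove G p (fun z => if z = v then p v - 2 else if z = u then p u + 1 else p z) := by
  left
  refine ⟨v, u, h, h2, by simp, by simp [h.ne'], ?_⟩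
  intro z h1 h2'
  simp only
  rw [if_neg h1, if_neg h2']

lemma reach_of_four {W : Type*} [DecidableEq W] {G : SimpleGraph W} {p : W → ℕ} {v x : W}
    (h4 : 4 ≤ p v)
    (hcase : v = x ∨ G.Adj v x ∨ ∃ r, G.Adj v r ∧ G.Adj x r) :
    RubblingReachable G p x := by
  rcases hcase with rfl | hadj | ⟨r, h1, h2⟩
  · exact ⟨p, Relation.ReflTransGen.refl, by omega⟩
  · refine ⟨_, Relation.ReflTransGen.single (pebbling_step p hadj (by omega)), ?_⟩
    simp [hadj.ne']
  · have hvr : v ≠ r := h1.ne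
    have hxr : x ≠ r := h2.ne
    set p1 := fun z => if z = v then p v - 2 else if z = r then p r + 1 else p z with hp1
    have m1 := pebbling_step p h1 (by omega)
    have hp1v : p1 v = p v - 2 := by simp [p1]
    have hp1r : p1 r = p r + 1 := by simp [p1, hvr.symm]
    set p2 := fun z => if z = v then p1 v - 2 else if z = r then p1 r + 1 else p1 z with hp2
    have m2 := pebbling_step p1 h1 (by omega)
    have hp2r : p2 r = p r + 2 := by simp [p2, hvr.symm, hp1r]
    set p3 := fun z => if z = r then p2 r - 2 else if z = x then p2 x + 1 else p2 z with hp3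
    have m3 := pebbling_step p2 h2.symm (by omega)
    refine ⟨p3, ?_, ?_⟩
    · exact Relation.ReflTransGen.head m1 (Relation.ReflTransGen.head m2
        (Relation.ReflTransGen.single m3))
    · have : p3 x = p2 x + 1 := by simp [p3, hxr]
      omega

/-- For every `n ≥ 3`, `ρ(Gₙ) > ⌊√(2n-1)⌋ + 1`. -/
theorem lt_rubblingNumber_GnGraph (n : ℕ) (hn : 3 ≤ n) :
    Nat.sqrt (2 * n - 1) + 1 < rubblingNumber (GnGraph n) := by
  have hs : 2 ≤ Nat.sqrt (2 * n - 1) := Nat.le_sqrt.2 (by omega)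
  rw [rubblingNumber]
  set S := {m | ∀ p : Vn n → ℕ, ∑ v, p v = m → ∀ x, RubblingReachable (GnGraph n) p x}
    with hS
  have hub : (3 * Fintype.card (Vn n) + 1) ∈ S := by
    intro p hsum x
    obtain ⟨v, hv⟩ : ∃ v, 4 ≤ p v := by
      by_contra hno
      push_neg at hno
      have h1 : ∑ v, p v ≤ Finset.univ.card • 3 :=
        Finset.sum_le_card_nsmul Finset.univ p 3 (fun v _ => by have := hno v; omega)
      rw [smul_eq_mul, Finset.card_univ] at h1
      omega
    by_cases hvx : v = x
    · exact reach_of_four hv (Or.inl hvx)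
    · rcases adj_or_common v x hvx with h | ⟨r, h1, h2⟩
      · exact reach_of_four hv (Or.inr (Or.inl h))
      · exact reach_of_four hv (Or.inr (Or.inr ⟨r, h1, h2⟩))
  have hlb : ∀ m ∈ S, Nat.sqrt (2 * n - 1) + 2 ≤ m := by
    intro m hm
    by_contra hlt
    push_neg at hlt
    have hm' : m ≤ ∑ v : Vn n, pz n v.1 := by rw [sum_pz hs]; omega
    obtain ⟨p', hple, hpsum⟩ := shrink hm'
    have hx₀m : ((1, 1) : ℕ × ℕ) ∈ GnVerts n := diag_mem le_rfl (by omega)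
    have hr := hm p' hpsum ⟨(1, 1), hx₀m⟩
    obtain ⟨t, ht, htc⟩ := reach_deriv hr
    exact not_deriv_target hs rfl ht (fun v => (htc v).trans (hple v))
  have hmem := Nat.sInf_mem (⟨_, hub⟩ : S.Nonempty)
  have := hlb _ hmem
  omega
end

section
/- Let 𝓗 be a family of 3-element subsets of a set X with q elements (a 3-uniform hypergraph on q vertices). If |E ∩ F| ≠ 1 for all E, F ∈ 𝓗, then |𝓗| ≤ q. -/
open Finset

variable {V : Type*}

set_option maxHeartbeats 1000000


lemma inter_two {X : Type*} [DecidableEq X] {H : Finset (Finset X)}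
    (h3 : ∀ E ∈ H, E.card = 3) (hint : ∀ E ∈ H, ∀ F ∈ H, (E ∩ F).card ≠ 1)
    {E F : Finset X} (hE : E ∈ H) (hF : F ∈ H) (hne : E ≠ F) {v : X}
    (hvE : v ∈ E) (hvF : v ∈ F) : (E ∩ F).card = 2 := by
  have h1 : 0 < (E ∩ F).card := card_pos.2 ⟨v, mem_inter.2 ⟨hvE, hvF⟩⟩
  have h2 : (E ∩ F).card ≤ 3 := by
    calc (E ∩ F).card ≤ E.card := card_le_card inter_subset_left
    _ = 3 := h3 E hE
  have h4 := hint E hE F hF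
  have h5 : (E ∩ F).card ≠ 3 := by
    intro hc
    have hEF : E ∩ F = E := eq_of_subset_of_card_le inter_subset_left (by rw [hc, h3 E hE])
    have hFE : E ∩ F = F := eq_of_subset_of_card_le inter_subset_right (by rw [hc, h3 F hF])
    exact hne (hEF ▸ hFE)
  omega


lemma kite {X : Type*} [DecidableEq X] {H : Finset (Finset X)}
    (h3 : ∀ E ∈ H, E.card = 3) (hint : ∀ E ∈ H, ∀ F ∈ H, (E ∩ F).card ≠ 1)
    {p q r s : X} (hpq : p ≠ q) (hpr : p ≠ r) (hps : p ≠ s) (hqr : q ≠ r)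
    (hqs : q ≠ s) (hrs : r ≠ s)
    (hE1 : ({q, r, s} : Finset X) ∈ H) (hE2 : ({p, r, s} : Finset X) ∈ H)
    (hE3 : ({p, q, s} : Finset X) ∈ H) :
    ∀ F ∈ H, (F ∩ ({p, q, r, s} : Finset X)).Nonempty → F ⊆ {p, q, r, s} := by
  intro F hF hne
  set S : Finset X := {p, q, r, s} with hS
  have hsub1 : ({q, r, s} : Finset X) ⊆ S := by intro t ht; simp [hS] at ht ⊢; tauto
  have hsub2 : ({p, r, s} : Finset X) ⊆ S := by intro t ht; simp [hS] at ht ⊢; tauto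
  have hsub3 : ({p, q, s} : Finset X) ⊆ S := by intro t ht; simp [hS] at ht ⊢; tauto
  have hk3 : (F ∩ S).card ≤ 3 := by
    calc (F ∩ S).card ≤ F.card := card_le_card inter_subset_left
    _ = 3 := h3 F hF
  have hk1 : 1 ≤ (F ∩ S).card := card_pos.2 hne
  interval_cases hcard : (F ∩ S).card
  · -- card = 1 : F ∩ S = {t}, t in some Ei, contradiction
    obtain ⟨t, ht⟩ := card_eq_one.1 hcard
    have ht' : t ∈ F ∩ S := by rw [ht]; exact mem_singleton_self t
    have htF : t ∈ F := (mem_inter.1 ht').1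
    have htS : t ∈ S := (mem_inter.1 ht').2
    have key : ∀ E0 ∈ H, E0 ⊆ S → t ∈ E0 → False := by
      intro E0 hE0 hE0S htE0
      have hsub : F ∩ E0 ⊆ {t} := by rw [← ht]; exact inter_subset_inter Subset.rfl hE0S
      have : F ∩ E0 = {t} :=
        Subset.antisymm hsub (singleton_subset_iff.2 (mem_inter.2 ⟨htF, htE0⟩))
      exact hint F hF E0 hE0 (by rw [this, card_singleton])
    by_cases htp : t = p
    · exact (key _ hE2 hsub2 (by simp [htp])).elim
    · have : t = q ∨ t = r ∨ t = s := by simp [hS] at htS; tauto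
      exact (key _ hE1 hsub1 (by simp; tauto)).elim
  · -- card = 2 : contradiction
    obtain ⟨t, u, htu, ht⟩ := card_eq_two.1 hcard
    have ht' : t ∈ F ∩ S := by rw [ht]; simp
    have hu' : u ∈ F ∩ S := by rw [ht]; simp
    have htF : t ∈ F := (mem_inter.1 ht').1
    have htS : t ∈ S := (mem_inter.1 ht').2
    have huF : u ∈ F := (mem_inter.1 hu').1
    have huS : u ∈ S := (mem_inter.1 hu').2
    have dich : ∀ E0 ∈ H, E0 ⊆ S → (t ∈ E0 ↔ u ∈ E0) := by
      intro E0 hE0 hE0S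
      have hsub : F ∩ E0 ⊆ {t, u} := by rw [← ht]; exact inter_subset_inter Subset.rfl hE0S
      have hne1 := hint F hF E0 hE0
      have hcle : (F ∩ E0).card ≤ 2 := by
        calc (F ∩ E0).card ≤ ({t, u} : Finset X).card := card_le_card hsub
        _ = 2 := card_pair htu
      have hkey : ∀ z, z ∈ F ∩ E0 → F ∩ E0 = {t, u} := by
        intro z hz
        have : 1 ≤ (F ∩ E0).card := card_pos.2 ⟨z, hz⟩
        have h2 : (F ∩ E0).card = 2 := by omega
        exact eq_of_subset_of_card_le hsub (by rw [card_pair htu, h2])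
      constructor
      · intro h
        have := hkey t (mem_inter.2 ⟨htF, h⟩)
        have : u ∈ F ∩ E0 := by rw [this]; simp
        exact (mem_inter.1 this).2
      · intro h
        have := hkey u (mem_inter.2 ⟨huF, h⟩)
        have : t ∈ F ∩ E0 := by rw [this]; simp
        exact (mem_inter.1 this).2
    have d1 := dich _ hE1 hsub1
    have d2 := dich _ hE2 hsub2
    have d3 := dich _ hE3 hsub3
    simp only [mem_insert, mem_singleton] at d1 d2 d3
    have htS' : t = p ∨ t = q ∨ t = r ∨ t = s := by simp [hS] at htS; tauto
    have huS' : u = p ∨ u = q ∨ u = r ∨ u = s := by simp [hS] at huS; tauto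
    have hqp := hpq.symm; have hrp := hpr.symm; have hsp := hps.symm
    have hrq := hqr.symm; have hsq := hqs.symm; have hsr := hrs.symm
    -- case analysis
    rcases htS' with h | h | h | h <;> subst h <;>
      rcases huS' with h | h | h | h <;> subst h <;> simp_all
  · -- card = 3 : F ⊆ S
    have : F ∩ S = F := eq_of_subset_of_card_le inter_subset_left (by rw [hcard, h3 F hF])
    exact inter_eq_left.1 this


lemma step2 {X : Type*} [DecidableEq X] {H : Finset (Finset X)} {n : ℕ}
    (h3 : ∀ E ∈ H, E.card = 3) (hint : ∀ E ∈ H, ∀ F ∈ H, (E ∩ F).card ≠ 1)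
    (ih : ∀ H' : Finset (Finset X), H'.card ≤ n → (∀ E ∈ H', E.card = 3) →
      (∀ E ∈ H', ∀ F ∈ H', (E ∩ F).card ≠ 1) → H'.card ≤ (H'.sup id).card)
    (hcn : H.card ≤ n + 1)
    {p q r s : X} (hpq : p ≠ q) (hpr : p ≠ r) (hps : p ≠ s) (hqr : q ≠ r)
    (hqs : q ≠ s) (hrs : r ≠ s)
    (hE1 : ({q, r, s} : Finset X) ∈ H) (hE2 : ({p, r, s} : Finset X) ∈ H)
    (hE3 : ({p, q, s} : Finset X) ∈ H) :
    H.card ≤ (H.sup id).card := by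
  set S : Finset X := {p, q, r, s} with hS
  have hqp := hpq.symm; have hrp := hpr.symm; have hsp := hps.symm
  have hrq := hqr.symm; have hsq := hqs.symm; have hsr := hrs.symm
  have hsub1 : ({q, r, s} : Finset X) ⊆ S := by intro t ht; simp [hS] at ht ⊢; tauto
  have hsub2 : ({p, r, s} : Finset X) ⊆ S := by intro t ht; simp [hS] at ht ⊢; tauto
  have hsub3 : ({p, q, s} : Finset X) ⊆ S := by intro t ht; simp [hS] at ht ⊢; tauto
  have hScard : S.card = 4 := by
    have h1 : ({q, r, s} : Finset X).card = 3 := card_eq_three.2 ⟨q, r, s, hqr, hqs, hrs, rfl⟩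
    show ({p, q, r, s} : Finset X).card = 4
    rw [show ({p, q, r, s} : Finset X) = insert p {q, r, s} from rfl,
      card_insert_of_notMem (by simp [hpq, hpr, hps]), h1]
  have hclose := kite h3 hint hpq hpr hps hqr hqs hrs hE1 hE2 hE3
  set T := H.filter (fun F => F ⊆ S) with hT
  set H' := H.filter (fun F => ¬ F ⊆ S) with hH'
  have hsplit : T.card + H'.card = H.card :=
    card_filter_add_card_filter_not (fun F => F ⊆ S)
  have hT4 : T.card ≤ 4 := by
    have hsub : T ⊆ S.powersetCard 3 := by
      intro F hF
      rw [mem_powersetCard]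
      exact ⟨(mem_filter.1 hF).2, h3 F (mem_filter.1 hF).1⟩
    calc T.card ≤ (S.powersetCard 3).card := card_le_card hsub
    _ = Nat.choose 4 3 := by rw [card_powersetCard, hScard]
    _ = 4 := by norm_num
  have hT3 : 3 ≤ T.card := by
    have hne1 : ({q, r, s} : Finset X) ≠ {p, r, s} := by
      intro h
      have : q ∈ ({p, r, s} : Finset X) := h ▸ (by simp)
      simp at this; tauto
    have hne2 : ({q, r, s} : Finset X) ≠ {p, q, s} := by
      intro h
      have : r ∈ ({p, q, s} : Finset X) := h ▸ (by simp)
      simp at this; tauto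
    have hne3 : ({p, r, s} : Finset X) ≠ {p, q, s} := by
      intro h
      have : r ∈ ({p, q, s} : Finset X) := h ▸ (by simp)
      simp at this; tauto
    have hsub : ({({q, r, s} : Finset X), {p, r, s}, {p, q, s}} : Finset (Finset X)) ⊆ T := by
      intro A hA
      simp only [mem_insert, mem_singleton] at hA
      rcases hA with rfl | rfl | rfl
      · exact mem_filter.2 ⟨hE1, hsub1⟩
      · exact mem_filter.2 ⟨hE2, hsub2⟩
      · exact mem_filter.2 ⟨hE3, hsub3⟩
    calc 3 = ({({q, r, s} : Finset X), {p, r, s}, {p, q, s}} : Finset (Finset X)).card :=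
        (card_eq_three.2 ⟨_, _, _, hne1, hne2, hne3, rfl⟩).symm
    _ ≤ T.card := card_le_card hsub
  have hH'empty : ∀ F ∈ H', F ∩ S = ∅ := by
    intro F hF
    obtain ⟨hFH, hnsub⟩ := mem_filter.1 hF
    by_contra hne
    exact hnsub (hclose F hFH (nonempty_iff_ne_empty.2 hne))
  have ihH' := ih H' (by omega)
    (fun F hF => h3 F (mem_filter.1 hF).1)
    (fun E hE F hF => hint E (mem_filter.1 hE).1 F (mem_filter.1 hF).1)
  have hdisj : Disjoint (H'.sup id) S := by
    refine Finset.disjoint_left.2 fun {t} ht hts => ?_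
    obtain ⟨F, hF, htF⟩ := mem_sup.1 ht
    have h0 := hH'empty F hF
    have : t ∈ F ∩ S := mem_inter.2 ⟨htF, hts⟩
    rw [h0] at this
    simp at this
  have hsubsup : H'.sup id ∪ S ⊆ H.sup id := by
    apply union_subset
    · intro t ht
      obtain ⟨F, hF, htF⟩ := mem_sup.1 ht
      exact mem_sup.2 ⟨F, filter_subset _ _ hF, htF⟩
    · intro t ht
      simp only [hS, mem_insert, mem_singleton] at ht
      rcases ht with rfl | ht
      · exact mem_sup.2 ⟨_, hE2, by simp⟩
      · exact mem_sup.2 ⟨_, hE1, by simp; tauto⟩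
  have hfinal : (H'.sup id).card + 4 ≤ (H.sup id).card := by
    rw [← hScard, ← card_union_of_disjoint hdisj]
    exact card_le_card hsubsup
  omega




lemma key_lemma {X : Type*} [DecidableEq X] :
    ∀ (n : ℕ) (H : Finset (Finset X)), H.card ≤ n →
      (∀ E ∈ H, E.card = 3) → (∀ E ∈ H, ∀ F ∈ H, (E ∩ F).card ≠ 1) →
      H.card ≤ (H.sup id).card := by
  intro n
  induction n with
  | zero => intro H h0 _ _; exact le_trans h0 (Nat.zero_le _)
  | succ n ih =>
    intro H hcn h3 hint
    rcases H.eq_empty_or_nonempty with rfl | ⟨E, hE⟩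
    · simp
    by_cases hc : ∃ E ∈ H, ∃ v ∈ E, ∀ F ∈ H, v ∈ F → F = E
    · -- some edge has a private vertex
      obtain ⟨E, hE, v, hvE, hv⟩ := hc
      have h3' : ∀ F ∈ H.erase E, F.card = 3 := fun F hF => h3 F (mem_of_mem_erase hF)
      have hint' : ∀ F ∈ H.erase E, ∀ G ∈ H.erase E, (F ∩ G).card ≠ 1 :=
        fun F hF G hG => hint F (mem_of_mem_erase hF) G (mem_of_mem_erase hG)
      have hcard' : (H.erase E).card = H.card - 1 := card_erase_of_mem hE
      have hHpos : 1 ≤ H.card := card_pos.2 ⟨E, hE⟩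
      have ihH := ih (H.erase E) (by omega) h3' hint'
      have hvsup : v ∈ H.sup id := mem_sup.2 ⟨E, hE, hvE⟩
      have hsub : (H.erase E).sup id ⊆ (H.sup id).erase v := by
        intro t ht
        obtain ⟨F, hF, htF⟩ := mem_sup.1 ht
        have hFH := mem_of_mem_erase hF
        refine mem_erase.2 ⟨?_, mem_sup.2 ⟨F, hFH, htF⟩⟩
        rintro rfl
        exact (mem_erase.1 hF).1 (hv F hFH htF)
      have hle : ((H.erase E).sup id).card ≤ (H.sup id).card - 1 := by
        have h := card_le_card hsub
        rwa [card_erase_of_mem hvsup] at h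
      have hsupPos : 1 ≤ (H.sup id).card := card_pos.2 ⟨v, hvsup⟩
      omega
    · -- no private vertices : find a kite
      push_neg at hc
      obtain ⟨a, b, c, hab, hac, hbc, hEeq⟩ := card_eq_three.1 (h3 E hE)
      have hcE : c ∈ E := by rw [hEeq]; simp
      obtain ⟨F, hF, hcF, hFE⟩ := hc E hE c hcE
      have hneEF : E ≠ F := fun h => hFE h.symm
      have h2 : (E ∩ F).card = 2 := inter_two h3 hint hE hF hneEF hcE hcF
      have hcEF : c ∈ E ∩ F := mem_inter.2 ⟨hcE, hcF⟩
      have hx1 : ((E ∩ F).erase c).card = 1 := by rw [card_erase_of_mem hcEF, h2]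
      obtain ⟨x, hx⟩ := card_eq_one.1 hx1
      have hx' : x ∈ (E ∩ F).erase c := by rw [hx]; simp
      have hxc : x ≠ c := (mem_erase.1 hx').1
      have hxEF : x ∈ E ∩ F := mem_of_mem_erase hx'
      have hxE : x ∈ E := (mem_inter.1 hxEF).1
      have hxF : x ∈ F := (mem_inter.1 hxEF).2
      have hEF : E ∩ F = {c, x} := by rw [← insert_erase hcEF, hx]
      -- y : the other vertex of E
      have hy0 : ∃ y, y ≠ x ∧ y ≠ c ∧ E = {x, y, c} := by
        have hxab : x = a ∨ x = b := by
          have h := hxE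
          rw [hEeq] at h
          simp at h
          tauto
        rcases hxab with h | h <;> subst h
        · exact ⟨b, fun h => hab h.symm, hbc, by rw [hEeq]⟩
        · exact ⟨a, hab, hac, by rw [hEeq]; ext t; simp; tauto⟩
      obtain ⟨y, hyx, hyc, hExyc⟩ := hy0
      have hyE : y ∈ E := by rw [hExyc]; simp
      have hyF : y ∉ F := by
        intro h
        have h' : y ∈ E ∩ F := mem_inter.2 ⟨hyE, h⟩
        rw [hEF] at h'
        simp at h'
        tauto
      -- d : the third vertex of F
      have hxF' : x ∈ F.erase c := mem_erase.2 ⟨hxc, hxF⟩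
      have hd1 : ((F.erase c).erase x).card = 1 := by
        rw [card_erase_of_mem hxF', card_erase_of_mem hcF, h3 F hF]
      obtain ⟨d, hd⟩ := card_eq_one.1 hd1
      have hd' : d ∈ (F.erase c).erase x := by rw [hd]; simp
      have hdx : d ≠ x := (mem_erase.1 hd').1
      have hdc : d ≠ c := (mem_erase.1 (mem_of_mem_erase hd')).1
      have hdF : d ∈ F := mem_of_mem_erase (mem_of_mem_erase hd')
      have hdE : d ∉ E := by
        intro h
        have h' : d ∈ E ∩ F := mem_inter.2 ⟨h, hdF⟩
        rw [hEF] at h'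
        simp at h'
        tauto
      have hdy : d ≠ y := fun h => hdE (h ▸ hyE)
      have hFeq : F = {x, c, d} := by
        have hsub : ({x, c, d} : Finset X) ⊆ F := by
          intro t ht
          simp at ht
          rcases ht with rfl | rfl | rfl <;> assumption
        have hcard : ({x, c, d} : Finset X).card = 3 :=
          card_eq_three.2 ⟨x, c, d, hxc, fun h => hdx h.symm, fun h => hdc h.symm, rfl⟩
        exact (eq_of_subset_of_card_le hsub (by rw [h3 F hF, hcard])).symm
      -- G : another edge through y
      obtain ⟨G, hG, hyG, hGE⟩ := hc E hE y hyE
      have hneEG : E ≠ G := fun h => hGE h.symm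
      have h2G : (E ∩ G).card = 2 := inter_two h3 hint hE hG hneEG hyE hyG
      have hyEG : y ∈ E ∩ G := mem_inter.2 ⟨hyE, hyG⟩
      have hz1 : ((E ∩ G).erase y).card = 1 := by rw [card_erase_of_mem hyEG, h2G]
      obtain ⟨z, hz⟩ := card_eq_one.1 hz1
      have hz' : z ∈ (E ∩ G).erase y := by rw [hz]; simp
      have hzy : z ≠ y := (mem_erase.1 hz').1
      have hzEG : z ∈ E ∩ G := mem_of_mem_erase hz'
      have hzE : z ∈ E := (mem_inter.1 hzEG).1
      have hzG : z ∈ G := (mem_inter.1 hzEG).2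
      have hEG : E ∩ G = {y, z} := by rw [← insert_erase hyEG, hz]
      -- w : the third vertex of G
      have hzG' : z ∈ G.erase y := mem_erase.2 ⟨hzy, hzG⟩
      have hw1 : ((G.erase y).erase z).card = 1 := by
        rw [card_erase_of_mem hzG', card_erase_of_mem hyG, h3 G hG]
      obtain ⟨w, hw⟩ := card_eq_one.1 hw1
      have hw' : w ∈ (G.erase y).erase z := by rw [hw]; simp
      have hwz : w ≠ z := (mem_erase.1 hw').1
      have hwy : w ≠ y := (mem_erase.1 (mem_of_mem_erase hw')).1
      have hwG : w ∈ G := mem_of_mem_erase (mem_of_mem_erase hw')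
      have hwE : w ∉ E := by
        intro h
        have h' : w ∈ E ∩ G := mem_inter.2 ⟨h, hwG⟩
        rw [hEG] at h'
        simp at h'
        tauto
      have hGeq : G = {y, z, w} := by
        have hsub : ({y, z, w} : Finset X) ⊆ G := by
          intro t ht
          simp at ht
          rcases ht with rfl | rfl | rfl <;> assumption
        have hcard : ({y, z, w} : Finset X).card = 3 :=
          card_eq_three.2 ⟨y, z, w, fun h => hzy h.symm, fun h => hwy h.symm,
            fun h => hwz h.symm, rfl⟩
        exact (eq_of_subset_of_card_le hsub (by rw [h3 G hG, hcard])).symm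
      have hGF : G ≠ F := fun h => hyF (h ▸ hyG)
      have hz_cases : z = x ∨ z = c := by
        have h := hzE
        rw [hExyc] at h
        simp at h
        tauto
      have hzF : z ∈ F := by rcases hz_cases with rfl | rfl <;> assumption
      have hGF2 : (G ∩ F).card = 2 := inter_two h3 hint hG hF hGF hzG hzF
      have hwF : w ∈ F := by
        by_contra hwF
        have hsub : G ∩ F ⊆ {z} := by
          intro t ht
          obtain ⟨htG, htF⟩ := mem_inter.1 ht
          rw [hGeq] at htG
          simp at htG ⊢
          rcases htG with rfl | rfl | rfl
          · exact absurd htF hyF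
          · rfl
          · exact absurd htF hwF
        have := card_le_card hsub
        rw [card_singleton] at this
        omega
      have hwd : w = d := by
        have h := hwF
        rw [hFeq] at h
        simp at h
        rcases h with rfl | rfl | rfl
        · exact absurd hxE hwE
        · exact absurd hcE hwE
        · rfl
      -- assemble the kite: S = {x, y, c, d}
      rcases hz_cases with h | h
      · -- z = x : G = {y, x, d}. Kite with p = d, q = y, r = c, s = x.
        have m1 : ({y, c, x} : Finset X) = E := by rw [hExyc]; ext t; simp; tauto
        have m2 : ({d, c, x} : Finset X) = F := by rw [hFeq]; ext t; simp; tauto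
        have m3 : ({d, y, x} : Finset X) = G := by rw [hGeq, h, hwd]; ext t; simp; tauto
        exact step2 h3 hint ih hcn hdy hdc hdx hyc hyx hxc.symm
          (by rw [m1]; exact hE) (by rw [m2]; exact hF) (by rw [m3]; exact hG)
      · -- z = c : G = {y, c, d}. Kite with p = d, q = y, r = x, s = c.
        have m1 : ({y, x, c} : Finset X) = E := by rw [hExyc]; ext t; simp; tauto
        have m2 : ({d, x, c} : Finset X) = F := by rw [hFeq]; ext t; simp; tauto
        have m3 : ({d, y, c} : Finset X) = G := by rw [hGeq, h, hwd]; ext t; simp; tauto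
        exact step2 h3 hint ih hcn hdy hdx hdc hyx hyc hxc
          (by rw [m1]; exact hE) (by rw [m2]; exact hF) (by rw [m3]; exact hG)

/-- If `𝓗` is a 3-uniform hypergraph on `q` vertices in which no two (not necessarily
distinct) edges intersect in exactly one vertex, then `𝓗` has at most `q` edges. -/
theorem card_hypergraph_le {X : Type*} [Fintype X] [DecidableEq X]
    (H : Finset (Finset X)) (h3 : ∀ E ∈ H, E.card = 3)
    (hint : ∀ E ∈ H, ∀ F ∈ H, (E ∩ F).card ≠ 1) :
    H.card ≤ Fintype.card X := by
  have h := key_lemma H.card H le_rfl h3 hint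
  calc H.card ≤ (H.sup id).card := h
  _ ≤ (univ : Finset X).card := card_le_card (subset_univ _)
  _ = Fintype.card X := card_univ
end

section
/- Let A₁, …, A_n be distinct 3-element subsets of a finite set X such that |A_i ∩ A_j| ≠ 1 for all i ≠ j. Then the characteristic vectors of A₁, …, A_n, regarded as elements of the vector space of functions from X to the field GF(2), are linearly independent over GF(2). -/
open Finset

variable {V : Type*}

/-- The characteristic vectors over `GF(2)` of distinct 3-element sets, no two of which
intersect in exactly one element, are linearly independent. -/
theorem charVectors_linearIndependent {X : Type*} [Fintype X] [DecidableEq X] {n : ℕ}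
    (A : Fin n → Finset X) (hinj : Function.Injective A)
    (h3 : ∀ i, (A i).card = 3)
    (hint : ∀ i j, i ≠ j → (A i ∩ A j).card ≠ 1) :
    LinearIndependent (ZMod 2)
      (fun i : Fin n => fun x : X => if x ∈ A i then (1 : ZMod 2) else 0) := by
  rw [Fintype.linearIndependent_iff]
  intro c hc j
  -- dot products
  have hdot : ∀ i k : Fin n,
      (∑ x : X, (if x ∈ A i then (1 : ZMod 2) else 0) * (if x ∈ A k then (1 : ZMod 2) else 0))
        = ((A i ∩ A k).card : ZMod 2) := by
    intro i k
    have : ∀ x : X, (if x ∈ A i then (1 : ZMod 2) else 0) * (if x ∈ A k then (1 : ZMod 2) else 0)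
        = if x ∈ A i ∩ A k then 1 else 0 := by
      intro x
      by_cases h1 : x ∈ A i <;> by_cases h2 : x ∈ A k <;>
        simp [h1, h2, Finset.mem_inter]
    rw [Finset.sum_congr rfl fun x _ => this x, Finset.sum_boole]
    congr 1
    rw [Finset.filter_mem_eq_inter, Finset.univ_inter]
  have hoff : ∀ i : Fin n, i ≠ j → ((A i ∩ A j).card : ZMod 2) = 0 := by
    intro i hij
    have hne1 := hint i j hij
    have hle : (A i ∩ A j).card ≤ 3 := by
      calc (A i ∩ A j).card ≤ (A i).card := Finset.card_le_card Finset.inter_subset_left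
        _ = 3 := h3 i
    have hne3 : (A i ∩ A j).card ≠ 3 := by
      intro h
      have hsub : A i ⊆ A j := by
        have h1 : A i ∩ A j = A i :=
          Finset.eq_of_subset_of_card_le Finset.inter_subset_left (by rw [h, h3 i])
        exact Finset.inter_eq_left.mp h1
      exact hij (hinj (Finset.eq_of_subset_of_card_le hsub (by rw [h3 i, h3 j])))
    interval_cases h : (A i ∩ A j).card <;> simp_all <;> decide
  have hx : ∀ x : X, (∑ i, c i • (if x ∈ A i then (1 : ZMod 2) else 0)) = 0 := by
    intro x
    have := congrFun hc x
    simpa using this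
  have key : (∑ i, c i * ((A i ∩ A j).card : ZMod 2)) = 0 := by
    calc (∑ i, c i * ((A i ∩ A j).card : ZMod 2))
        = ∑ i, ∑ x : X, c i * ((if x ∈ A i then (1 : ZMod 2) else 0)
            * (if x ∈ A j then (1 : ZMod 2) else 0)) := by
          refine Finset.sum_congr rfl fun i _ => ?_
          rw [← Finset.mul_sum, hdot]
      _ = ∑ x : X, ∑ i, c i * ((if x ∈ A i then (1 : ZMod 2) else 0)
            * (if x ∈ A j then (1 : ZMod 2) else 0)) := Finset.sum_comm
      _ = ∑ x : X, (∑ i, c i • (if x ∈ A i then (1 : ZMod 2) else 0))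
            * (if x ∈ A j then (1 : ZMod 2) else 0) := by
          refine Finset.sum_congr rfl fun x _ => ?_
          rw [Finset.sum_mul]
          refine Finset.sum_congr rfl fun i _ => ?_
          by_cases h1 : x ∈ A i <;> by_cases h2 : x ∈ A j <;>
            simp [h1, h2, smul_eq_mul]
      _ = 0 := Finset.sum_eq_zero fun x _ => by rw [hx x, zero_mul]
  rw [Finset.sum_eq_single j (fun i _ hij => by rw [hoff i hij, mul_zero])
    (fun h => absurd (Finset.mem_univ j) h)] at key
  rw [Finset.inter_self, h3 j] at key
  have h31 : ((3 : ℕ) : ZMod 2) = 1 := by decide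
  rw [h31, mul_one] at key
  exact key
end
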